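/- arXiv:1903.06138 — 6 statements merged into one kernel-verified Lean document; each statement's English description precedes it below -/
import Mathlib

section
/- There exists a constant K > 0 such that for every integer k ≥ 1 and every subset A ⊆ ℤ^{⌈k/2⌉}, one has P((B(k,1), …, B(k,⌈k/2⌉)) ∈ A) ≤ K · P((S_1, …, S_{⌈k/2⌉}) ∈ A), where B(k,·) is a uniform bridge in 𝓑_k^{≥−1} and (S_j) is the random walk with step law P(step = i) = 2^{−(i+2)}, i ≥ −1. -/
/-!
Pass from a bridge `b` to its increments `dᵢ = bᵢ - bᵢ₋₁`: bridges of length `k` are the vectors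
`d ∈ {-1, 0, 1, …}ᵏ` with sum `0`, so there are `multichoose k k` of them (stars and bars on
`dᵢ + 1`). If a prefix `q` of length `m` has admissible increments summing to `s = n - t`, where
`n = k - m`, the bridges extending it are counted by `multichoose n t`, while the walk follows `q`
with probability `2^{-(s + 2m)}`. Since `t ↦ 2⁻ᵗ multichoose n t` is maximal near `t = n`, the
ratio of the two is at most `2 · 4ᵐ · centralBinom n / centralBinom k`, and
`4ᵐ · centralBinom n ≤ 2 · centralBinom (n + m)` as long as `m ≤ n + 1`. Summing over the prefixes
in `A` gives the constant `4`.
-/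

open MeasureTheory ProbabilityTheory Filter
open scoped ENNReal

/-- The set `𝓑_k^{≥−1}` of discrete bridges: integer sequences `(b 1, …, b k)`
(0-indexed here as `b : Fin k → ℤ`) all of whose increments, starting from `b 0 = 0`,
are at least `-1`, and which end at `0`. -/
def IsBridge {k : ℕ} (b : Fin k → ℤ) : Prop :=
  (∀ i : Fin k, -1 ≤ (Fin.cons 0 b : Fin (k + 1) → ℤ) i.succ
      - (Fin.cons 0 b : Fin (k + 1) → ℤ) i.castSucc) ∧
  (Fin.cons (0 : ℤ) b : Fin (k + 1) → ℤ) (Fin.last k) = 0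

open Finset

namespace Nat

lemma two_mul_centralBinom_le_succ (n : ℕ) : 2 * centralBinom n ≤ centralBinom (n + 1) := by
  refine Nat.le_of_mul_le_mul_left ?_ n.succ_pos
  rw [succ_mul_centralBinom_succ]
  nlinarith [centralBinom_pos n]

lemma choose_add_succ_mul (r t : ℕ) :
    (r + t + 1).choose r * (t + 1) = (r + t).choose r * (r + t + 1) := by
  have := choose_mul_succ_eq (r + t) r
  rw [show r + t + 1 - r = t + 1 by omega] at this
  exact this.symm

/-- The terms `2⁻ᵗ * C(r + t, r)` increase up to `t = r` and decrease afterwards. -/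
lemma two_pow_mul_choose_add_le (r t : ℕ) :
    2 ^ r * (r + t).choose r ≤ 2 ^ t * centralBinom r := by
  have hcenter : (r + r).choose r = centralBinom r := by rw [centralBinom, two_mul]
  rcases le_total r t with hrt | htr
  · induction t, hrt using Nat.le_induction with
    | base => rw [hcenter]
    | succ t hrt ih =>
      refine Nat.le_of_mul_le_mul_right ?_ t.succ_pos
      calc 2 ^ r * (r + (t + 1)).choose r * (t + 1)
          = 2 ^ r * (r + t).choose r * (r + t + 1) := by
            rw [mul_assoc, ← add_assoc, choose_add_succ_mul, mul_assoc]
        _ ≤ 2 ^ t * centralBinom r * (2 * (t + 1)) := by gcongr; omega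
        _ = 2 ^ (t + 1) * centralBinom r * (t + 1) := by ring
  · induction htr using Nat.decreasingInduction with
    | self => rw [hcenter]
    | of_succ t htr ih =>
      have hdouble : 2 * (r + t).choose r ≤ (r + t + 1).choose r := by
        refine Nat.le_of_mul_le_mul_right ?_ t.succ_pos
        calc 2 * (r + t).choose r * (t + 1) ≤ (r + t).choose r * (r + t + 1) := by
              rw [mul_comm 2, mul_assoc]; gcongr; omega
          _ = (r + t + 1).choose r * (t + 1) := (choose_add_succ_mul r t).symm
      refine Nat.le_of_mul_le_mul_left ?_ two_pos
      calc 2 * (2 ^ r * (r + t).choose r) ≤ 2 ^ r * (r + (t + 1)).choose r := by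
            rw [← add_assoc]; linarith [Nat.mul_le_mul_left (2 ^ r) hdouble]
        _ ≤ 2 ^ (t + 1) * centralBinom r := ih
        _ = 2 * (2 ^ t * centralBinom r) := by ring

lemma two_pow_mul_multichoose_le (n t : ℕ) :
    2 ^ n * multichoose n t ≤ 2 ^ t * centralBinom n := by
  rcases n with _ | r
  · cases t <;> simp [multichoose_zero_succ]
  calc 2 ^ (r + 1) * multichoose (r + 1) t = 2 * (2 ^ r * (r + t).choose r) := by
        rw [multichoose_eq, show r + 1 + t - 1 = r + t by omega, choose_symm_add]; ring
    _ ≤ 2 * (2 ^ t * centralBinom r) := Nat.mul_le_mul_left 2 (two_pow_mul_choose_add_le r t)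
    _ ≤ 2 ^ t * centralBinom (r + 1) := by
        rw [mul_left_comm]; gcongr; exact two_mul_centralBinom_le_succ r

/-- A quantitative form of `centralBinom (n + d) ≈ 4 ^ d * centralBinom n`: the factors
`(2j + 1) / (2j + 2)`, `n ≤ j < n + d`, lost along the way multiply to at least
`1 - d / (2n + 2)`. -/
lemma four_pow_mul_centralBinom_mul_le (n d : ℕ) :
    4 ^ d * (2 * n + 2 - d) * centralBinom n ≤ (2 * n + 2) * centralBinom (n + d) := by
  induction d with
  | zero => simp [mul_comm]
  | succ d ih =>
    rcases Nat.lt_or_ge (2 * n + 1) d with hd | hd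
    · simp [show 2 * n + 2 - (d + 1) = 0 by omega]
    obtain ⟨c, hc⟩ : ∃ c, c + d = 2 * n + 1 := ⟨2 * n + 1 - d, by omega⟩
    have hstep : (n + d + 1) * (4 ^ (d + 1) * c) ≤ 2 * (2 * (n + d) + 1) * (4 ^ d * (c + 1)) := by
      rw [pow_succ]; nlinarith [pow_pos (show (0 : ℕ) < 4 by norm_num) d]
    refine Nat.le_of_mul_le_mul_left ?_ (show 0 < n + d + 1 by omega)
    rw [show 2 * n + 2 - (d + 1) = c by omega]
    rw [show 2 * n + 2 - d = c + 1 by omega] at ih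
    calc (n + d + 1) * (4 ^ (d + 1) * c * centralBinom n)
        = (n + d + 1) * (4 ^ (d + 1) * c) * centralBinom n := by ring
      _ ≤ 2 * (2 * (n + d) + 1) * (4 ^ d * (c + 1)) * centralBinom n :=
          Nat.mul_le_mul_right _ hstep
      _ = 2 * (2 * (n + d) + 1) * (4 ^ d * (c + 1) * centralBinom n) := by ring
      _ ≤ 2 * (2 * (n + d) + 1) * ((2 * n + 2) * centralBinom (n + d)) :=
          Nat.mul_le_mul_left _ ih
      _ = (n + (d + 1)) * ((2 * n + 2) * centralBinom (n + (d + 1))) := by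
          rw [← add_assoc, mul_left_comm (n + d + 1), succ_mul_centralBinom_succ]; ring

lemma four_pow_mul_centralBinom_le {n m : ℕ} (hm : m ≤ n + 1) :
    4 ^ m * centralBinom n ≤ 2 * centralBinom (n + m) := by
  refine Nat.le_of_mul_le_mul_left ?_ n.succ_pos
  calc (n + 1) * (4 ^ m * centralBinom n) ≤ 4 ^ m * (2 * n + 2 - m) * centralBinom n := by
        rw [mul_left_comm, ← mul_assoc]; gcongr; omega
    _ ≤ (2 * n + 2) * centralBinom (n + m) := four_pow_mul_centralBinom_mul_le n m
    _ = (n + 1) * (2 * centralBinom (n + m)) := by ring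

lemma multichoose_mul_two_pow_le {n m t u : ℕ} (hm : m ≤ n + 1) (htu : u + t = n + 2 * m) :
    multichoose n t * 2 ^ u ≤ 2 * centralBinom (n + m) := by
  refine Nat.le_of_mul_le_mul_right ?_ (pow_pos two_pos t)
  calc multichoose n t * 2 ^ u * 2 ^ t = 2 ^ n * multichoose n t * 4 ^ m := by
        rw [mul_assoc, ← pow_add, htu, pow_add, pow_mul]; ring
    _ ≤ 2 ^ t * centralBinom n * 4 ^ m :=
        Nat.mul_le_mul_right _ (two_pow_mul_multichoose_le n t)
    _ ≤ 2 ^ t * (2 * centralBinom (n + m)) := by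
        rw [mul_assoc, mul_comm (centralBinom n)]
        exact Nat.mul_le_mul_left _ (four_pow_mul_centralBinom_le hm)
    _ = 2 * centralBinom (n + m) * 2 ^ t := by ring

lemma centralBinom_le_two_mul_multichoose (k : ℕ) : centralBinom k ≤ 2 * multichoose k k := by
  rcases k with _ | r
  · simp
  rw [multichoose_eq, centralBinom_eq_two_mul_choose, show r + 1 + (r + 1) - 1 = 2 * r + 1 by omega,
    show 2 * (r + 1) = 2 * r + 1 + 1 by ring, choose_succ_succ, two_mul ((2 * r + 1).choose _)]
  gcongr
  rw [choose_symm_half]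

end Nat

lemma Fin.partialSum_last {M : Type*} [AddCommMonoid M] {k : ℕ} (f : Fin k → M) :
    Fin.partialSum f (Fin.last k) = ∑ i, f i := by
  rw [Fin.partialSum, Fin.val_last, List.take_of_length_le (by simp), List.sum_ofFn]

section Increments

variable {k m : ℕ}

def increments (b : Fin k → ℤ) (i : Fin k) : ℤ :=
  (Fin.cons 0 b : Fin (k + 1) → ℤ) i.succ - (Fin.cons 0 b : Fin (k + 1) → ℤ) i.castSucc

def IsBridgeIncrements (d : Fin k → ℤ) : Prop :=
  (∀ i, -1 ≤ d i) ∧ ∑ i, d i = 0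

lemma partialSum_increments (b : Fin k → ℤ) :
    Fin.partialSum (increments b) = Fin.cons 0 b := by
  funext i
  induction i using Fin.induction with
  | zero => simp
  | succ i ih => rw [Fin.partialSum_succ, ih, increments]; ring

lemma increments_tail_partialSum (d : Fin k → ℤ) :
    increments (Fin.tail (Fin.partialSum d)) = d := by
  funext i
  have hcons : (Fin.cons 0 (Fin.tail (Fin.partialSum d)) : Fin (k + 1) → ℤ) =
      Fin.partialSum d := by
    simpa using Fin.cons_self_tail (Fin.partialSum d)
  rw [increments, hcons, Fin.partialSum_succ]; ring

def incrementsEquiv (k : ℕ) : (Fin k → ℤ) ≃ (Fin k → ℤ) where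
  toFun := increments
  invFun d := Fin.tail (Fin.partialSum d)
  left_inv b := by simp only [partialSum_increments]; rfl
  right_inv := increments_tail_partialSum

lemma increments_injective : Function.Injective (increments (k := k)) :=
  (incrementsEquiv k).injective

lemma sum_increments (b : Fin k → ℤ) :
    ∑ i, increments b i = (Fin.cons 0 b : Fin (k + 1) → ℤ) (Fin.last k) := by
  rw [← Fin.partialSum_last, partialSum_increments]

lemma isBridge_iff_increments (b : Fin k → ℤ) :
    IsBridge b ↔ IsBridgeIncrements (increments b) := by
  rw [IsBridgeIncrements, sum_increments]; rfl

lemma increments_comp_castLE (h : m ≤ k) (b : Fin k → ℤ) :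
    increments (fun i : Fin m => b (Fin.castLE h i)) =
      fun i => increments b (Fin.castLE h i) := by
  have hcons (j : Fin (m + 1)) :
      (Fin.cons 0 (fun i : Fin m => b (Fin.castLE h i)) : Fin (m + 1) → ℤ) j =
        (Fin.cons 0 b : Fin (k + 1) → ℤ) (Fin.castLE (Nat.succ_le_succ h) j) := by
    induction j using Fin.cases <;> rfl
  funext i
  simp only [increments, hcons]
  rfl

lemma increments_sum_range_succ (x : ℕ → ℤ) :
    increments (fun i : Fin m => ∑ j ∈ range (i + 1), x j) = fun i : Fin m => x i := by
  have hcons : (Fin.cons 0 (fun i : Fin m => ∑ j ∈ range (i + 1), x j) : Fin (m + 1) → ℤ) =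
      fun j : Fin (m + 1) => ∑ l ∈ range j, x l := by
    funext j
    induction j using Fin.cases <;> simp
  funext i
  simp only [increments, hcons]
  simp [sum_range_succ]

end Increments

lemma natCard_sum_eq_multichoose (ι : Type*) [Fintype ι] (t : ℕ) :
    Nat.card {y : ι → ℕ // ∑ i, y i = t} = Nat.multichoose (Fintype.card ι) t := by
  classical
  rw [← Nat.card_congr (Sym.equivNatSumOfFintype ι t), Sym.natCard_sym_eq_multichoose,
    Nat.card_eq_fintype_card]

lemma natCard_neg_one_le_sum_eq (ι : Type*) [Fintype ι] (t : ℕ) :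
    Nat.card {r : ι → ℤ // (∀ i, -1 ≤ r i) ∧ ∑ i, r i = t - Fintype.card ι} =
      Nat.multichoose (Fintype.card ι) t := by
  rw [← natCard_sum_eq_multichoose]
  have hshift (r : {r : ι → ℤ // (∀ i, -1 ≤ r i) ∧ ∑ i, r i = t - Fintype.card ι}) (i : ι) :
      ((r.1 i + 1).toNat : ℤ) = r.1 i + 1 :=
    Int.toNat_of_nonneg (by linarith [r.2.1 i])
  refine Nat.card_congr
    { toFun r := ⟨fun i => (r.1 i + 1).toNat, Nat.cast_injective (R := ℤ) ?_⟩
      invFun y := ⟨fun i => y.1 i - 1, fun i => by linarith [Int.natCast_nonneg (y.1 i)], ?_⟩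
      left_inv r := Subtype.ext (funext fun i => by simp [hshift])
      right_inv y := Subtype.ext (funext fun i => by simp) }
  · push_cast
    simp [hshift, sum_add_distrib, r.2.2]
  · simp [sum_sub_distrib, ← Nat.cast_sum, y.2]

lemma natCard_isBridge (k : ℕ) :
    Nat.card {b : Fin k → ℤ // IsBridge b} = Nat.multichoose k k := by
  have hcount := natCard_neg_one_le_sum_eq (Fin k) k
  rw [Fintype.card_fin, sub_self] at hcount
  rw [← hcount]
  exact Nat.card_congr ((incrementsEquiv k).subtypeEquiv isBridge_iff_increments)

lemma natCard_isBridgeIncrements_prefix {m n : ℕ} (e : Fin m → ℤ) (he : ∀ i, -1 ≤ e i) (t : ℕ)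
    (hsum : ∑ i, e i = n - t) :
    Nat.card {d : Fin (m + n) → ℤ // IsBridgeIncrements d ∧
      (fun i => d (Fin.castAdd n i)) = e} = Nat.multichoose n t := by
  have hsuffix := natCard_neg_one_le_sum_eq (Fin n) t
  rw [Fintype.card_fin] at hsuffix
  rw [← hsuffix]
  refine Nat.card_congr
    { toFun d := ⟨fun j => d.1 (Fin.natAdd m j), fun j => d.2.1.1 _, ?_⟩
      invFun r := ⟨Fin.append e r.1,
        ⟨Fin.addCases (by simpa using he) (by simpa using r.2.1), by
          simp [Fin.sum_univ_add, hsum, r.2.2]⟩, funext (Fin.append_left e r.1)⟩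
      left_inv := by
        rintro ⟨d, hd, rfl⟩
        exact Subtype.ext Fin.append_castAdd_natAdd
      right_inv r := Subtype.ext (funext (Fin.append_right e r.1)) }
  have hzero := d.2.1.2
  rw [Fin.sum_univ_add, d.2.2, hsum] at hzero
  linarith

lemma natCard_isBridge_prefix_eq {k m : ℕ} (h : m ≤ k) (q : Fin m → ℤ) :
    Nat.card {b : Fin k → ℤ // IsBridge b ∧ (fun i => b (Fin.castLE h i)) = q} =
      Nat.card {d : Fin k → ℤ // IsBridgeIncrements d ∧
        (fun i => d (Fin.castLE h i)) = increments q} :=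
  Nat.card_congr <| (incrementsEquiv k).subtypeEquiv fun b =>
    and_congr (isBridge_iff_increments b)
      (by rw [← increments_injective.eq_iff, increments_comp_castLE]; rfl)

noncomputable def stepWeight (j : ℤ) : ℝ≥0∞ := if -1 ≤ j then 2⁻¹ ^ (j + 2).toNat else 0

lemma prod_stepWeight {m : ℕ} (e : Fin m → ℤ) (he : ∀ i, -1 ≤ e i) :
    ∏ i, stepWeight (e i) = 2⁻¹ ^ ∑ i, (e i + 2).toNat := by
  rw [← prod_pow_eq_pow_sum]
  exact prod_congr rfl fun i _ => if_pos (he i)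

lemma natCard_isBridgeIncrements_prefix_le {m n : ℕ} (hm : m ≤ n + 1) (e : Fin m → ℤ) :
    (Nat.card {d : Fin (m + n) → ℤ // IsBridgeIncrements d ∧
      (fun i => d (Fin.castAdd n i)) = e} : ℝ≥0∞) ≤
      2 * Nat.centralBinom (m + n) * ∏ i, stepWeight (e i) := by
  rcases isEmpty_or_nonempty {d : Fin (m + n) → ℤ // IsBridgeIncrements d ∧
      (fun i => d (Fin.castAdd n i)) = e} with hempty | ⟨⟨d, ⟨hge, hzero⟩, rfl⟩⟩
  · simp
  have hsum : ∑ i, d (Fin.castAdd n i) ≤ n := by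
    have hsuffix : (-1 : ℤ) * n ≤ ∑ j : Fin n, d (Fin.natAdd m j) := by
      simpa using sum_le_sum fun j (_ : j ∈ univ) => hge (Fin.natAdd m j)
    rw [Fin.sum_univ_add] at hzero
    linarith
  obtain ⟨t, ht⟩ := Int.eq_ofNat_of_zero_le (sub_nonneg.2 hsum)
  rw [natCard_isBridgeIncrements_prefix _ (fun i => hge _) t (by omega),
    prod_stepWeight _ fun i => hge _]
  set u := ∑ i, (d (Fin.castAdd n i) + 2).toNat
  have hu : u + t = n + 2 * m := by
    have hucast : (u : ℤ) = ∑ i, d (Fin.castAdd n i) + 2 * m := by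
      simp only [u, Nat.cast_sum]
      rw [sum_congr rfl fun i _ => Int.toNat_of_nonneg (by linarith [hge (Fin.castAdd n i)]),
        sum_add_distrib]
      simp [mul_comm]
    omega
  have hnum := Nat.multichoose_mul_two_pow_le hm hu
  rw [add_comm n m] at hnum
  rw [← ENNReal.inv_pow, ← div_eq_mul_inv, ENNReal.le_div_iff_mul_le (by simp) (by simp)]
  exact_mod_cast hnum

lemma natCard_le_mul_measure_preimage {α β Ω : Type*} [MeasurableSpace Ω] [MeasurableSpace β]
    [MeasurableSingletonClass β] {μ : Measure Ω} {P : α → Prop} (hP : {a | P a}.Finite)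
    (f : α → β) {g : Ω → β} (hg : Measurable g) (C : ℝ≥0∞)
    (hC : ∀ q, (Nat.card {a // P a ∧ f a = q} : ℝ≥0∞) ≤ C * μ (g ⁻¹' {q})) (A : Set β) :
    (Nat.card {a // P a ∧ f a ∈ A} : ℝ≥0∞) ≤ C * μ (g ⁻¹' A) := by
  classical
  set T := hP.toFinset
  have hcard (Q : α → Prop) : Nat.card {a // P a ∧ Q a} = #{a ∈ T | Q a} := by
    rw [← Nat.card_eq_finsetCard]
    exact Nat.card_congr (Equiv.subtypeEquivRight fun a => by simp [T])
  set F : Finset β := {a ∈ T | f a ∈ A}.image f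
  calc (Nat.card {a // P a ∧ f a ∈ A} : ℝ≥0∞)
      = ∑ q ∈ F, (#((T.filter (f · ∈ A)).filter (f · = q)) : ℝ≥0∞) := by
        rw [hcard, card_eq_sum_card_image f]; push_cast; rfl
    _ ≤ ∑ q ∈ F, C * μ (g ⁻¹' {q}) := by
        gcongr with q
        calc (#((T.filter (f · ∈ A)).filter (f · = q)) : ℝ≥0∞) ≤ #(T.filter (f · = q)) := by
              gcongr; exact filter_subset (f · ∈ A) T
          _ ≤ C * μ (g ⁻¹' {q}) := by rw [← hcard]; exact hC q
    _ = C * μ (g ⁻¹' F) := by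
        rw [← mul_sum, sum_measure_preimage_singleton _ fun q _ => hg (measurableSet_singleton q)]
    _ ≤ C * μ (g ⁻¹' A) := by
        gcongr
        intro q hq
        obtain ⟨a, ha, rfl⟩ := mem_image.1 hq
        exact (mem_filter.1 ha).2

lemma measure_walk_eq {Ω : Type*} [MeasurableSpace Ω] {μ : Measure Ω} {ξ : ℕ → Ω → ℤ}
    (hindep : iIndepFun ξ μ) (hlaw : ∀ n i, μ {ω | ξ n ω = i} = stepWeight i)
    {S : ℕ → Ω → ℤ} (hS : ∀ n ω, S n ω = ∑ i ∈ range n, ξ i ω) {m : ℕ} (q : Fin m → ℤ) :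
    μ {ω | (fun i : Fin m => S (i + 1) ω) = q} = ∏ i, stepWeight (increments q i) := by
  have hset : {ω | (fun i : Fin m => S (i + 1) ω) = q} =
      ⋂ i ∈ (univ : Finset (Fin m)), ξ i ⁻¹' {increments q i} := by
    ext ω
    have hincr : increments (fun i : Fin m => S (i + 1) ω) = fun i : Fin m => ξ i ω := by
      simp only [hS]; exact increments_sum_range_succ _
    change _ = q ↔ _
    rw [← increments_injective.eq_iff, hincr]
    simp [funext_iff]
  rw [hset, (hindep.precomp Fin.val_injective).measure_inter_preimage_eq_mul univ
    fun i _ => measurableSet_singleton _]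
  exact prod_congr rfl fun i _ => hlaw i _

theorem natCard_isBridge_prefix_div_le {Ω : Type*} [MeasurableSpace Ω] (μ : Measure Ω)
    (ξ : ℕ → Ω → ℤ) (hmeas : ∀ n, Measurable (ξ n)) (hindep : iIndepFun ξ μ)
    (hlaw : ∀ n i, μ {ω | ξ n ω = i} = stepWeight i)
    (S : ℕ → Ω → ℤ) (hS : ∀ n ω, S n ω = ∑ i ∈ range n, ξ i ω)
    {k m : ℕ} (hmk : m ≤ k) (hm : 2 * m ≤ k + 1) (A : Set (Fin m → ℤ)) :
    (Nat.card {b : Fin k → ℤ // IsBridge b ∧ (fun i => b (Fin.castLE hmk i)) ∈ A} : ℝ≥0∞)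
        / Nat.card {b : Fin k → ℤ // IsBridge b} ≤
      4 * μ {ω | (fun i : Fin m => S (i + 1) ω) ∈ A} := by
  obtain ⟨n, rfl⟩ := Nat.exists_eq_add_of_le hmk
  have hB := natCard_isBridge (m + n)
  have hcentral := Nat.centralBinom_le_two_mul_multichoose (m + n)
  have hfin : {b : Fin (m + n) → ℤ | IsBridge b}.Finite := by
    refine Set.finite_coe_iff.1 (Nat.finite_of_card_ne_zero (α := {b // IsBridge b}) ?_)
    have := Nat.centralBinom_pos (m + n)
    omega
  have hwalk : Measurable fun ω => fun i : Fin m => S (i + 1) ω := by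
    refine measurable_pi_lambda _ fun i => ?_
    rw [show S (i + 1) = fun ω => ∑ j ∈ range (i + 1), ξ j ω from funext (hS _)]
    exact Finset.measurable_sum _ fun j _ => hmeas j
  refine ENNReal.div_le_of_le_mul ?_
  rw [mul_right_comm]
  refine natCard_le_mul_measure_preimage hfin _ hwalk _ (fun q => ?_) A
  simp only [Set.preimage, Set.mem_singleton_iff]
  rw [natCard_isBridge_prefix_eq, measure_walk_eq hindep hlaw hS, hB]
  calc _ ≤ 2 * (Nat.centralBinom (m + n) : ℝ≥0∞) * ∏ i, stepWeight (increments q i) :=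
        natCard_isBridgeIncrements_prefix_le (by omega) _
    _ ≤ 4 * (Nat.multichoose (m + n) (m + n) : ℝ≥0∞) * ∏ i, stepWeight (increments q i) := by
        have h : 2 * Nat.centralBinom (m + n) ≤ 4 * Nat.multichoose (m + n) (m + n) := by omega
        gcongr ?_ * _
        exact_mod_cast h

/-- There is a constant `K > 0` such that for every `k ≥ 1` and every
`A ⊆ ℤ^{⌈k/2⌉}`, the probability that the first `⌈k/2⌉` coordinates of a uniform
bridge of `𝓑_k^{≥−1}` fall in `A` is at most `K` times the probability that
`(S_1, …, S_{⌈k/2⌉}) ∈ A`, where `S` is the random walk with step law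
`P(step = i) = 2^{-(i+2)}`, `i ≥ -1`. -/
theorem stmt2 {Ω : Type} [MeasurableSpace Ω] (μ : Measure Ω)
    (ξ : ℕ → Ω → ℤ) (hmeas : ∀ n, Measurable (ξ n))
    (hindep : iIndepFun ξ μ)
    (hlaw : ∀ n (i : ℤ), μ {ω | ξ n ω = i} =
      if -1 ≤ i then (2 : ℝ≥0∞)⁻¹ ^ (i + 2).toNat else 0)
    (S : ℕ → Ω → ℤ) (hS : ∀ n ω, S n ω = ∑ i ∈ Finset.range n, ξ i ω) :
    ∃ K : ℝ, 0 < K ∧ ∀ (k : ℕ) (hk : 1 ≤ k) (A : Set (Fin ((k + 1) / 2) → ℤ)),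
      (Nat.card {b : Fin k → ℤ // IsBridge b ∧
          (fun i : Fin ((k + 1) / 2) => b (Fin.castLE (by omega) i)) ∈ A} : ℝ≥0∞)
        / (Nat.card {b : Fin k → ℤ // IsBridge b} : ℝ≥0∞)
      ≤ ENNReal.ofReal K *
          μ {ω | (fun i : Fin ((k + 1) / 2) => S ((i : ℕ) + 1) ω) ∈ A} := by
  refine ⟨4, by norm_num, fun k _ A => ?_⟩
  rw [ENNReal.ofReal_ofNat]
  exact natCard_isBridge_prefix_div_le μ ξ hmeas hindep hlaw S hS _ (by omega) A
end

section
/- For every integer k ≥ 1 and every 1 ≤ j ≤ k, the coordinate B(k,j) of a uniform bridge in 𝓑_k^{≥−1} has mean E[B(k,j)] = 0 and variance Var(B(k,j)) = 2 j (k − j) / (k + 1). -/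
open MeasureTheory ProbabilityTheory Filter
open scoped ENNReal Classical

open Finset

lemma aux_two_mul_choose_two (a : ℕ) : a * (a - 1) = 2 * a.choose 2 := by
  induction a with
  | zero => simp
  | succ n ih =>
    rw [Nat.choose_succ_succ, Nat.mul_add, ← ih, Nat.choose_one_right]
    cases n with
    | zero => simp
    | succ m => simp [Nat.succ_sub_one]; ring

lemma aux_hs (s n : ℕ) : ∑ a ∈ range (n+1), (a+s).choose s = (n+s+1).choose (s+1) := by
  induction n with
  | zero => simp
  | succ n ih =>
    rw [Finset.sum_range_succ, ih, show n+1+s = n+s+1 from by ring,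
      show n+s+1+1 = (n+s+1)+1 from by ring]
    have h := Nat.choose_succ_succ (n+s+1) s
    simp only [Nat.succ_eq_add_one] at h
    omega

lemma aux_vand (r s n : ℕ) :
    ∑ a ∈ range (n+1), (a+r).choose r * ((n-a)+s).choose s = (n+r+s+1).choose (r+s+1) := by
  induction r generalizing s with
  | zero =>
    simp only [Nat.add_zero, Nat.choose_zero_right, one_mul, Nat.zero_add]
    rw [← Finset.sum_range_reflect]
    have h1 : ∑ a ∈ range (n+1), ((n - (n+1-1-a)) + s).choose s
        = ∑ a ∈ range (n+1), (a+s).choose s :=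
      Finset.sum_congr rfl fun a ha => by rw [mem_range] at ha; congr 1; omega
    rw [h1, aux_hs]
  | succ r ih =>
    have key : ∀ a, (a+(r+1)).choose (r+1) = ∑ a' ∈ range (a+1), (a'+r).choose r := by
      intro a; rw [aux_hs r a, Nat.add_assoc]
    have step1 : ∀ a ∈ range (n+1), (a+(r+1)).choose (r+1) * ((n-a)+s).choose s
        = ∑ a' ∈ range (n+1), if a' ≤ a then (a'+r).choose r * ((n-a)+s).choose s else 0 := by
      intro a ha; rw [mem_range] at ha
      rw [key, Finset.sum_mul, ← Finset.sum_filter]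
      refine Finset.sum_congr ?_ fun _ _ => rfl
      ext x; simp only [mem_filter, mem_range]; omega
    rw [Finset.sum_congr rfl step1, Finset.sum_comm]
    have step2 : ∀ a' ∈ range (n+1),
        (∑ a ∈ range (n+1), if a' ≤ a then (a'+r).choose r * ((n-a)+s).choose s else 0)
        = (a'+r).choose r * ((n-a')+(s+1)).choose (s+1) := by
      intro a' ha'; rw [mem_range] at ha'
      rw [← Finset.sum_filter]
      have hfil : (range (n+1)).filter (fun a => a' ≤ a) = Finset.Ico a' (n+1) := by
        ext x; simp only [mem_filter, mem_range, mem_Ico]; omega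
      rw [hfil, Finset.sum_Ico_eq_sum_range, show n+1-a' = (n-a')+1 from by omega,
        ← Finset.mul_sum]
      congr 1
      rw [← Finset.sum_range_reflect]
      have h2 : ∑ b ∈ range ((n-a')+1), ((n - (a' + ((n-a')+1-1-b))) + s).choose s
          = ∑ b ∈ range ((n-a')+1), (b+s).choose s :=
        Finset.sum_congr rfl fun b hb => by rw [mem_range] at hb; congr 1; omega
      rw [h2, aux_hs, Nat.add_assoc]
    rw [Finset.sum_congr rfl step2, ih (s+1)]
    congr 1 <;> ring
open Finset

abbrev adt := Finset.Nat.antidiagonalTuple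

lemma aux_sum_adt_succ {M : Type*} [AddCommMonoid M] (p n : ℕ) (g : (Fin (p+1) → ℕ) → M) :
    ∑ t ∈ adt (p+1) n, g t
      = ∑ ab ∈ Finset.HasAntidiagonal.antidiagonal n, ∑ x ∈ adt p ab.2, g (Fin.cons ab.1 x) := by
  rw [Finset.sum_sigma']
  refine Finset.sum_nbij' (fun t => ⟨(t 0, ∑ i, Fin.tail t i), Fin.tail t⟩)
    (fun y => Fin.cons y.1.1 y.2) ?_ ?_ ?_ ?_ ?_
  · intro t ht
    rw [Finset.Nat.mem_antidiagonalTuple] at ht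
    rw [Finset.mem_sigma, Finset.HasAntidiagonal.mem_antidiagonal, Finset.Nat.mem_antidiagonalTuple]
    refine ⟨?_, rfl⟩
    rw [← ht, Fin.sum_univ_succ]
    rfl
  · rintro ⟨⟨a, b⟩, x⟩ hy
    rw [Finset.mem_sigma] at hy
    obtain ⟨h1, h2⟩ := hy
    rw [Finset.HasAntidiagonal.mem_antidiagonal] at h1
    rw [Finset.Nat.mem_antidiagonalTuple] at h2 ⊢
    rw [Fin.sum_cons, h2, h1]
  · intro t ht
    exact Fin.cons_self_tail t
  · rintro ⟨⟨a, b⟩, x⟩ hy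
    rw [Finset.mem_sigma, Finset.Nat.mem_antidiagonalTuple] at hy
    have h2 : ∑ i, x i = b := hy.2
    simp only [Fin.cons_zero, Fin.tail_cons]
    subst h2
    rfl
  · intro t ht
    rw [Fin.cons_self_tail]

lemma aux_card_adt (p n : ℕ) : (adt (p+1) n).card = (n+p).choose p := by
  induction p generalizing n with
  | zero => simp
  | succ p ih =>
    rw [Finset.card_eq_sum_ones, aux_sum_adt_succ,
      Finset.Nat.sum_antidiagonal_eq_sum_range_succ_mk]
    have h1 : ∀ a ∈ range (n+1),
        (∑ _x ∈ adt (p+1) (n-a), (1:ℕ)) = (a+0).choose 0 * ((n-a)+p).choose p := by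
      intro a _
      rw [← Finset.card_eq_sum_ones, ih]
      simp
    rw [Finset.sum_congr rfl h1, aux_vand]
    congr 1 <;> omega

lemma aux_adt_q (p : ℕ) :
    ∑ t ∈ adt (p+2) (p+2), (t 0)^2 = 2 * (2*p+3).choose (p+3) + (2*p+3).choose (p+2) := by
  refine (aux_sum_adt_succ (p+1) (p+2) (fun t => (t 0)^2)).trans ?_
  rw [Finset.Nat.sum_antidiagonal_eq_sum_range_succ_mk]
  have h1 : ∀ a ∈ range (p+2+1),
      (∑ x ∈ adt (p+1) (p+2-a), ((Fin.cons a x : Fin (p+1+1) → ℕ) 0)^2)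
        = ((p+2-a)+p).choose p * (a*(a-1)) + ((p+2-a)+p).choose p * a := by
    intro a _
    simp only [Fin.cons_zero]
    rw [Finset.sum_const, aux_card_adt, smul_eq_mul]
    have ha2 : a^2 = a*(a-1) + a := by
      cases a with | zero => simp | succ m => simp [Nat.succ_sub_one]; ring
    rw [ha2, Nat.mul_add]
  rw [Finset.sum_congr rfl h1, Finset.sum_add_distrib]
  congr 1
  · have h2 : ∀ a ∈ range (p+2+1),
        ((p+2-a)+p).choose p * (a*(a-1)) = 2 * (a.choose 2 * ((p+2-a)+p).choose p) := by
      intro a _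
      rw [aux_two_mul_choose_two]; ring
    rw [Finset.sum_congr rfl h2, ← Finset.mul_sum]
    have h3 : ∑ a ∈ range (p+2+1), a.choose 2 * ((p+2-a)+p).choose p
        = ∑ a ∈ range (p+1), (a+2).choose 2 * ((p-a)+p).choose p := by
      rw [Finset.sum_range_succ' (fun a => a.choose 2 * ((p+2-a)+p).choose p) (p+2),
        Finset.sum_range_succ' (fun a => (a+1).choose 2 * ((p+2-(a+1))+p).choose p) (p+1)]
      simp only [show Nat.choose 0 2 = 0 from rfl, show Nat.choose 1 2 = 0 from rfl,
        Nat.zero_mul, Nat.add_zero]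
      refine Finset.sum_congr rfl fun a ha => ?_
      rw [mem_range] at ha
      have e1 : a+1+1 = a+2 := by omega
      have e2 : p+2-(a+1+1)+p = (p-a)+p := by omega
      rw [e1, e2]
    rw [h3, aux_vand 2 p p, show p+2+p+1 = 2*p+3 from by omega,
      show 2+p+1 = p+3 from by omega]
  · have h4 : ∑ a ∈ range (p+2+1), ((p+2-a)+p).choose p * a
        = ∑ a ∈ range ((p+1)+1), (a+1).choose 1 * (((p+1)-a)+p).choose p := by
      rw [Finset.sum_range_succ' (fun a => ((p+2-a)+p).choose p * a) (p+2)]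
      simp only [Nat.mul_zero, Nat.add_zero]
      refine Finset.sum_congr rfl fun a ha => ?_
      rw [mem_range] at ha
      rw [Nat.mul_comm, Nat.choose_one_right]
      have e1 : p+2-(a+1)+p = ((p+1)-a)+p := by omega
      rw [e1]
    rw [h4, aux_vand 1 p (p+1), show p+1+1+p+1 = 2*p+3 from by omega,
      show 1+p+1 = p+2 from by omega]
lemma aux_perm {M : Type*} [AddCommMonoid M] (k n : ℕ) (σ : Equiv.Perm (Fin k))
    (g : (Fin k → ℕ) → M) :
    ∑ t ∈ adt k n, g (fun i => t (σ i)) = ∑ t ∈ adt k n, g t := by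
  refine Finset.sum_nbij' (fun t => fun i => t (σ i)) (fun t => fun i => t (σ.symm i))
    ?_ ?_ ?_ ?_ ?_
  · intro t ht
    rw [Finset.Nat.mem_antidiagonalTuple] at ht ⊢
    rw [← ht]
    exact Equiv.sum_comp σ t
  · intro t ht
    rw [Finset.Nat.mem_antidiagonalTuple] at ht ⊢
    rw [← ht]
    exact Equiv.sum_comp σ.symm t
  · intro t _; funext i; simp
  · intro t _; funext i; simp
  · intro t _; rfl

lemma aux_sq_sum (k n : ℕ) (i0 i1 : Fin k) :
    ∑ t ∈ adt k n, (t i0 : ℤ)^2 = ∑ t ∈ adt k n, (t i1 : ℤ)^2 := by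
  have := aux_perm k n (Equiv.swap i0 i1) (fun t => (t i0 : ℤ)^2)
  simpa [Equiv.swap_apply_left] using this.symm

lemma aux_coord_sum (k n : ℕ) (i0 i1 : Fin k) :
    ∑ t ∈ adt k n, (t i0 : ℤ) = ∑ t ∈ adt k n, (t i1 : ℤ) := by
  have := aux_perm k n (Equiv.swap i0 i1) (fun t => (t i0 : ℤ))
  simpa [Equiv.swap_apply_left] using this.symm

lemma aux_pair_sum (k n : ℕ) (i0 i1 l0 l1 : Fin k) (h01 : i0 ≠ i1) (hl : l0 ≠ l1) :
    ∑ t ∈ adt k n, (t i0 : ℤ) * (t i1 : ℤ) = ∑ t ∈ adt k n, (t l0 : ℤ) * (t l1 : ℤ) := by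
  set σ1 := Equiv.swap l0 i0 with hσ1
  set c := σ1.symm i1 with hc
  have hcl0 : c ≠ l0 := by
    intro h
    apply h01
    have : σ1 c = i1 := Equiv.apply_symm_apply _ _
    rw [h] at this
    rw [← this]
    simp [hσ1, Equiv.swap_apply_left]
  set σ2 := Equiv.swap l1 c with hσ2
  have hs0 : (σ2.trans σ1) l0 = i0 := by
    simp only [Equiv.trans_apply]
    rw [hσ2, Equiv.swap_apply_of_ne_of_ne hl (Ne.symm hcl0), hσ1, Equiv.swap_apply_left]
  have hs1 : (σ2.trans σ1) l1 = i1 := by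
    simp only [Equiv.trans_apply]
    rw [hσ2, Equiv.swap_apply_left, hc, Equiv.apply_symm_apply]
  have := aux_perm k n (σ2.trans σ1) (fun t => (t l0 : ℤ) * (t l1 : ℤ))
  rw [← this]
  simp only [hs0, hs1]

lemma aux_expand (k n : ℕ) (i0 i1 : Fin k) (h01 : i0 ≠ i1) (I : Finset (Fin k)) :
    ∑ t ∈ adt k n, (∑ i ∈ I, (t i : ℤ))^2
      = (I.card : ℤ) * (∑ t ∈ adt k n, (t i0 : ℤ)^2)
        + (I.card : ℤ) * ((I.card : ℤ) - 1) * (∑ t ∈ adt k n, (t i0 : ℤ) * (t i1 : ℤ)) := by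
  set Q := ∑ t ∈ adt k n, (t i0 : ℤ)^2 with hQ
  set P := ∑ t ∈ adt k n, (t i0 : ℤ) * (t i1 : ℤ) with hP
  have e1 : ∑ t ∈ adt k n, (∑ i ∈ I, (t i : ℤ))^2
      = ∑ i ∈ I, ∑ i' ∈ I, ∑ t ∈ adt k n, (t i : ℤ) * (t i' : ℤ) := by
    have h1 : ∀ t ∈ adt k n, (∑ i ∈ I, (t i : ℤ))^2
        = ∑ i ∈ I, ∑ i' ∈ I, (t i : ℤ) * (t i' : ℤ) := by
      intro t _
      rw [sq, Finset.sum_mul_sum]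
    rw [Finset.sum_congr rfl h1, Finset.sum_comm]
    refine Finset.sum_congr rfl fun i _ => Finset.sum_comm
  have e2 : ∀ i ∈ I, ∀ i' ∈ I, (∑ t ∈ adt k n, (t i : ℤ) * (t i' : ℤ))
      = if i' = i then Q else P := by
    intro i _ i' _
    by_cases h : i' = i
    · subst h
      rw [if_pos rfl, hQ]
      have h2 : ∀ t ∈ adt k n, (t i' : ℤ) * (t i' : ℤ) = (t i' : ℤ)^2 := fun t _ => (sq _).symm
      rw [Finset.sum_congr rfl h2]
      exact aux_sq_sum k n i' i0
    · rw [if_neg h]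
      exact aux_pair_sum k n i i' i0 i1 (Ne.symm h) h01
  have e3 : ∀ i ∈ I, ∑ i' ∈ I, (∑ t ∈ adt k n, (t i : ℤ) * (t i' : ℤ))
      = P * I.card + (Q - P) := by
    intro i hi
    rw [Finset.sum_congr rfl (e2 i hi)]
    have h3 : ∀ i' ∈ I, (if i' = i then Q else P) = P + (if i' = i then Q - P else 0) := by
      intro i' _; split <;> ring
    rw [Finset.sum_congr rfl h3, Finset.sum_add_distrib, Finset.sum_const,
      Finset.sum_ite_eq' I i (fun _ => Q - P), if_pos hi]
    push_cast
    ring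
  rw [e1, Finset.sum_congr rfl e3, Finset.sum_const]
  push_cast
  ring
noncomputable section

/-- the `m`-th entry of `t` as an integer, `0` out of range -/
def tzz (k : ℕ) (t : Fin k → ℕ) (m : ℕ) : ℤ := if h : m < k then (t ⟨m, h⟩ : ℤ) else 0

/-- the bridge associated to a step tuple -/
def phi (k : ℕ) (t : Fin k → ℕ) : Fin k → ℤ :=
  fun i => (∑ m ∈ Finset.range (i.val+1), tzz k t m) - ((i.val+1 : ℕ) : ℤ)

lemma tzz_nonneg (k : ℕ) (t : Fin k → ℕ) (m : ℕ) : 0 ≤ tzz k t m := by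
  unfold tzz; split <;> positivity

lemma tzz_app (k : ℕ) (t : Fin k → ℕ) (i : Fin k) : tzz k t i.val = (t i : ℤ) := by
  unfold tzz
  rw [dif_pos i.isLt]

lemma aux_sum_lt {M : Type*} [AddCommMonoid M] (k w : ℕ) (hw : w ≤ k) (f : Fin k → M)
    (fz : ℕ → M) (hf : ∀ (m : ℕ) (h : m < k), fz m = f ⟨m, h⟩) :
    ∑ m ∈ Finset.range w, fz m
      = ∑ i ∈ Finset.univ.filter (fun i : Fin k => i.val < w), f i := by
  refine Finset.sum_bij' (fun m hm => (⟨m, by rw [Finset.mem_range] at hm; omega⟩ : Fin k))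
    (fun i _ => i.val) ?_ ?_ ?_ ?_ ?_
  · intro m hm
    rw [Finset.mem_range] at hm
    simp only [Finset.mem_filter, Finset.mem_univ, true_and]
    exact hm
  · intro i hi
    rw [Finset.mem_filter] at hi
    rw [Finset.mem_range]
    exact hi.2
  · intro m hm; rfl
  · intro i hi; rfl
  · intro m hm
    rw [Finset.mem_range] at hm
    exact hf m (by omega)

lemma aux_card_filter_lt (k w : ℕ) (hw : w ≤ k) :
    (Finset.univ.filter (fun i : Fin k => i.val < w)).card = w := by
  have := aux_sum_lt k w hw (fun _ => (1:ℕ)) (fun _ => (1:ℕ)) (fun _ _ => rfl)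
  simp only [Finset.sum_const, smul_eq_mul, mul_one, Finset.card_range] at this
  omega

lemma aux_cons_eval (k : ℕ) (x : Fin k → ℤ) (G : ℕ → ℤ) (hG0 : G 0 = 0)
    (hGs : ∀ i : Fin k, x i = G (i.val+1)) :
    ∀ m : Fin (k+1), (Fin.cons 0 x : Fin (k+1) → ℤ) m = G m.val := by
  intro m
  induction m using Fin.cases with
  | zero => simpa using hG0.symm
  | succ i => simpa [Fin.cons_succ] using hGs i

lemma aux_sum_tzz_k (k : ℕ) (t : Fin k → ℕ) (ht : t ∈ adt k k) :
    ∑ m ∈ Finset.range k, tzz k t m = (k : ℤ) := by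
  rw [aux_sum_lt k k le_rfl (fun i => (t i : ℤ)) (tzz k t) (fun m h => by unfold tzz; exact dif_pos h)]
  have huniv : Finset.univ.filter (fun i : Fin k => i.val < k) = Finset.univ :=
    Finset.filter_true_of_mem (fun i _ => i.isLt)
  rw [huniv, ← Nat.cast_sum]
  rw [Finset.Nat.mem_antidiagonalTuple] at ht
  rw [ht]

lemma aux_phi_isBridge (k : ℕ) (t : Fin k → ℕ) (ht : t ∈ adt k k) : IsBridge (phi k t) := by
  have hcons := aux_cons_eval k (phi k t)
    (fun m => (∑ r ∈ Finset.range m, tzz k t r) - (m : ℤ)) (by simp)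
    (fun i => by simp [phi])
  constructor
  · intro i
    rw [hcons i.succ, hcons i.castSucc, Fin.val_succ, Fin.coe_castSucc]
    rw [Finset.sum_range_succ]
    have := tzz_nonneg k t i.val
    push_cast
    linarith
  · rw [hcons (Fin.last k), Fin.val_last]
    rw [aux_sum_tzz_k k t ht]
    ring

lemma aux_bridge_exists (k : ℕ) (b : Fin k → ℤ) (hb : IsBridge b) :
    ∃ t ∈ adt k k, phi k t = b := by
  obtain ⟨hstep, hlast⟩ := hb
  set g : ℕ → ℤ := fun m => (Fin.cons 0 b : Fin (k+1) → ℤ) ⟨min m k, by omega⟩ with hg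
  have hg0 : g 0 = 0 := by
    have : (⟨min 0 k, by omega⟩ : Fin (k+1)) = 0 := by
      apply Fin.ext; simp
    rw [hg]; simp only [this]; simp
  have hgb : ∀ i : Fin k, g (i.val+1) = b i := by
    intro i
    have : (⟨min (i.val+1) k, by omega⟩ : Fin (k+1)) = i.succ := by
      apply Fin.ext; simp only [Fin.val_succ]; omega
    rw [hg]; simp only [this]; simp
  have hgstep : ∀ m, m < k → -1 ≤ g (m+1) - g m := by
    intro m hm
    have h1 : (⟨min (m+1) k, by omega⟩ : Fin (k+1)) = (⟨m, hm⟩ : Fin k).succ := by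
      apply Fin.ext; simp only [Fin.val_succ]; omega
    have h2 : (⟨min m k, by omega⟩ : Fin (k+1)) = (⟨m, hm⟩ : Fin k).castSucc := by
      apply Fin.ext; simp only [Fin.coe_castSucc]; omega
    rw [hg]; simp only [h1, h2]
    exact hstep ⟨m, hm⟩
  have hgk : g k = 0 := by
    have : (⟨min k k, by omega⟩ : Fin (k+1)) = Fin.last k := by
      apply Fin.ext; simp [Fin.val_last]
    rw [hg]; simp only [this]; exact hlast
  refine ⟨fun i => (g (i.val+1) - g i.val + 1).toNat, ?_, ?_⟩
  · set t : Fin k → ℕ := fun i => (g (i.val+1) - g i.val + 1).toNat with hts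
    have htZ : ∀ i : Fin k, (t i : ℤ) = g (i.val+1) - g i.val + 1 := by
      intro i
      rw [hts]
      exact Int.toNat_of_nonneg (by have := hgstep i.val i.isLt; linarith)
    rw [Finset.Nat.mem_antidiagonalTuple]
    have : ((∑ i, t i : ℕ) : ℤ) = (k : ℤ) := by
      rw [Nat.cast_sum]
      have h1 : ∀ i ∈ Finset.univ, (t i : ℤ) = g (i.val+1) - g i.val + 1 :=
        fun i _ => htZ i
      rw [Finset.sum_congr rfl h1, Finset.sum_add_distrib, Finset.sum_const]
      rw [Fin.sum_univ_eq_sum_range (fun v => g (v+1) - g v) k, Finset.sum_range_sub g k]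
      simp [hg0, hgk]
    exact_mod_cast this
  · set t : Fin k → ℕ := fun i => (g (i.val+1) - g i.val + 1).toNat with hts
    have htZ : ∀ i : Fin k, (t i : ℤ) = g (i.val+1) - g i.val + 1 := by
      intro i
      rw [hts]
      exact Int.toNat_of_nonneg (by have := hgstep i.val i.isLt; linarith)
    have htele : ∀ w, w ≤ k → ∑ m ∈ Finset.range w, tzz k t m = g w + w := by
      intro w hw
      have h1 : ∀ m ∈ Finset.range w, tzz k t m = (g (m+1) - g m) + 1 := by
        intro m hm
        rw [Finset.mem_range] at hm
        have hmk : m < k := by omega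
        have : tzz k t m = (t ⟨m, hmk⟩ : ℤ) := by unfold tzz; rw [dif_pos hmk]
        rw [this, htZ ⟨m, hmk⟩]
      rw [Finset.sum_congr rfl h1, Finset.sum_add_distrib, Finset.sum_const,
        Finset.sum_range_sub g w]
      simp [hg0]
    funext i
    show (∑ m ∈ Finset.range (i.val+1), tzz k t m) - ((i.val+1 : ℕ) : ℤ) = b i
    rw [htele (i.val+1) (by omega), ← hgb i]
    push_cast
    ring

lemma aux_phi_inj (k : ℕ) : Function.Injective (phi k) := by
  intro t t' h
  have hD : ∀ v, v ≤ k →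
      ∑ m ∈ Finset.range v, tzz k t m = ∑ m ∈ Finset.range v, tzz k t' m := by
    intro v hv
    cases v with
    | zero => simp
    | succ w =>
      have hw : w < k := by omega
      have := congrFun h ⟨w, hw⟩
      show ∑ m ∈ Finset.range (w+1), tzz k t m = ∑ m ∈ Finset.range (w+1), tzz k t' m
      simp only [phi] at this
      omega
  funext i
  have h1 := hD i.val (by omega)
  have h2 := hD (i.val+1) (by omega)
  rw [Finset.sum_range_succ, Finset.sum_range_succ, tzz_app, tzz_app] at h2
  have : (t i : ℤ) = (t' i : ℤ) := by omega
  exact_mod_cast this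

end
lemma aux_final (k j : ℕ) (hk : 1 ≤ k) (hj : 1 ≤ j) (hjk : j ≤ k) (hq : j - 1 < k) :
    (∑ t ∈ adt k k, phi k t ⟨j-1, hq⟩) = 0 ∧
    ((k:ℤ)+1) * (∑ t ∈ adt k k, (phi k t ⟨j-1, hq⟩)^2)
      = 2 * (j:ℤ) * ((k:ℤ) - (j:ℤ)) * ((adt k k).card : ℤ) := by
  classical
  obtain ⟨Ij, hIj⟩ : ∃ I : Finset (Fin k), I = Finset.univ.filter (fun i : Fin k => i.val < j) :=
    ⟨_, rfl⟩
  have hXY : ∀ t : Fin k → ℕ, phi k t ⟨j-1, hq⟩ = (∑ i ∈ Ij, (t i : ℤ)) - (j:ℤ) := by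
    intro t
    rw [hIj]
    show (∑ m ∈ Finset.range ((j-1)+1), tzz k t m) - (((j-1)+1 : ℕ) : ℤ) = _
    have hj1 : j - 1 + 1 = j := by omega
    rw [hj1, aux_sum_lt k j hjk (fun i => (t i : ℤ)) (tzz k t)
      (fun m h => by unfold tzz; exact dif_pos h)]
  have hcard : Ij.card = j := by rw [hIj]; exact aux_card_filter_lt k j hjk
  obtain ⟨N, hNdef⟩ : ∃ x : ℤ, x = ((adt k k).card : ℤ) := ⟨_, rfl⟩
  have hN : ∀ t ∈ adt k k, ∑ i : Fin k, (t i : ℤ) = (k:ℤ) := by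
    intro t ht
    rw [← Nat.cast_sum]
    rw [Finset.Nat.mem_antidiagonalTuple] at ht
    rw [ht]
  have hk0 : (k:ℤ) ≠ 0 := by
    have : (1:ℤ) ≤ (k:ℤ) := by exact_mod_cast hk
    omega
  have hS : ∀ i : Fin k, ∑ t ∈ adt k k, (t i : ℤ) = N := by
    intro i
    have h1 : ∑ i' : Fin k, ∑ t ∈ adt k k, (t i' : ℤ) = N * (k:ℤ) := by
      rw [Finset.sum_comm, Finset.sum_congr rfl hN, Finset.sum_const, nsmul_eq_mul, ← hNdef]
    have h2 : ∀ i' ∈ (Finset.univ : Finset (Fin k)),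
        ∑ t ∈ adt k k, (t i' : ℤ) = ∑ t ∈ adt k k, (t i : ℤ) :=
      fun i' _ => aux_coord_sum k k i' i
    rw [Finset.sum_congr rfl h2, Finset.sum_const] at h1
    simp only [Finset.card_univ, Fintype.card_fin, nsmul_eq_mul] at h1
    refine mul_left_cancel₀ hk0 ?_
    rw [h1]; ring
  have hSI : ∑ t ∈ adt k k, ∑ i ∈ Ij, (t i : ℤ) = (j:ℤ) * N := by
    rw [Finset.sum_comm, Finset.sum_congr rfl (fun i _ => hS i), Finset.sum_const, hcard,
      nsmul_eq_mul]
  constructor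
  · rw [Finset.sum_congr rfl (fun t _ => hXY t), Finset.sum_sub_distrib, hSI,
      Finset.sum_const, nsmul_eq_mul, ← hNdef]
    ring
  · by_cases hk1 : k = 1
    · -- special case k = 1 (then j = 1)
      have hj1 : j = 1 := le_antisymm (hk1 ▸ hjk) hj
      subst hk1
      subst hj1
      have hzero : ∑ t ∈ adt 1 1, (phi 1 t ⟨1-1, hq⟩)^2 = 0 := by
        rw [show adt 1 1 = {![1]} from Finset.Nat.antidiagonalTuple_one 1,
          Finset.sum_singleton]
        have : phi 1 ![1] ⟨1-1, hq⟩ = 0 := by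
          show (∑ m ∈ Finset.range ((1-1)+1), tzz 1 ![1] m) - (((1-1)+1 : ℕ) : ℤ) = 0
          rw [Finset.sum_range_one]
          unfold tzz
          norm_num
        rw [this]
        ring
      rw [hzero]
      push_cast
      ring
    · have hk2 : 2 ≤ k := Nat.lt_of_le_of_ne hk fun h => hk1 h.symm
      obtain ⟨p, rfl⟩ : ∃ p, k = p + 2 := ⟨k-2, (Nat.sub_add_cancel hk2).symm⟩
      have e2 : 2*(p+2)-1 = 2*p+3 := by clear hSI; omega
      have e3 : (p+2)+(p+1) = 2*p+3 := by clear hSI; omega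
      have e4 : 2*p+3 - (p+1) = p+2 := by clear hSI; omega
      have e5 : p+1 ≤ 2*p+3 := by clear hSI; omega
      have e6 : 2*(p+2)-1-(p+2) = (p+2)-1 := by clear hSI; omega
      obtain ⟨i0, hi0⟩ : ∃ x : Fin (p+2), x = ⟨0, hk⟩ := ⟨_, rfl⟩
      obtain ⟨i1, hi1⟩ : ∃ x : Fin (p+2), x = ⟨1, hk2⟩ := ⟨_, rfl⟩
      have h01 : i0 ≠ i1 := by
        rw [hi0, hi1, Ne, Fin.ext_iff]
        norm_num
      obtain ⟨Q, hQdef⟩ : ∃ x : ℤ, x = ∑ t ∈ adt (p+2) (p+2), (t i0 : ℤ)^2 := ⟨_, rfl⟩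
      obtain ⟨P, hPdef⟩ : ∃ x : ℤ, x = ∑ t ∈ adt (p+2) (p+2), (t i0 : ℤ) * (t i1 : ℤ) := ⟨_, rfl⟩
      have hQP_univ : (((p+2):ℕ):ℤ)*Q + (((p+2):ℕ):ℤ)*((((p+2):ℕ):ℤ)-1)*P
          = N * (((p+2):ℕ):ℤ)^2 := by
        have hexp := aux_expand (p+2) (p+2) i0 i1 h01 Finset.univ
        have hl : ∀ t ∈ adt (p+2) (p+2),
            (∑ i ∈ Finset.univ, (t i : ℤ))^2 = ((((p+2):ℕ):ℤ))^2 :=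
          fun t ht => by rw [hN t ht]
        rw [Finset.sum_congr rfl hl, Finset.sum_const, nsmul_eq_mul, ← hNdef] at hexp
        simp only [Finset.card_univ, Fintype.card_fin] at hexp
        rw [← hQdef, ← hPdef] at hexp
        linarith [hexp]
      have hP : ((((p+2):ℕ):ℤ)-1)*P = (((p+2):ℕ):ℤ)*N - Q := by
        refine mul_left_cancel₀ hk0 ?_
        linear_combination hQP_univ
      have hQval : Q = 2*(((2*(p+2)-1).choose ((p+2)+1) : ℕ) : ℤ)
          + (((2*(p+2)-1).choose (p+2) : ℕ) : ℤ) := by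
        have h0 : i0 = (0 : Fin (p+2)) := by
          rw [hi0]; apply Fin.ext; simp
        rw [hQdef, h0]
        have hcast : ∑ t ∈ adt (p+2) (p+2), ((t 0 : ℕ) : ℤ)^2
            = ((∑ t ∈ adt (p+2) (p+2), (t 0)^2 : ℕ) : ℤ) := by push_cast; rfl
        rw [hcast, aux_adt_q p, e2, show (p+2)+1 = p+3 from rfl]
        push_cast
        ring
      have hNval : N = (((2*(p+2)-1).choose (p+2) : ℕ) : ℤ) := by
        rw [hNdef]
        have hc := aux_card_adt (p+1) (p+2)
        have hee : adt (p+2) (p+2) = adt (p+1+1) (p+2) := rfl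
        rw [hee, hc]
        have hsymm := Nat.choose_symm e5
        rw [e4] at hsymm
        rw [e2, e3, ← hsymm]
      have hkey : ((((p+2):ℕ):ℤ)+1) * (((2*(p+2)-1).choose ((p+2)+1) : ℕ) : ℤ)
          = ((((p+2):ℕ):ℤ)-1) * (((2*(p+2)-1).choose (p+2) : ℕ) : ℤ) := by
        have h := Nat.choose_succ_right_eq (2*(p+2)-1) (p+2)
        rw [e6] at h
        have hcast := congrArg (Nat.cast : ℕ → ℤ) h
        push_cast [Nat.cast_sub hk] at hcast
        push_cast
        linarith
      have hQN2 : ((((p+2):ℕ):ℤ)+1)*(Q - N) = 2*((((p+2):ℕ):ℤ)-1)*N := by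
        rw [hQval, hNval]
        push_cast at hkey ⊢
        linarith
      have expand2 : ∀ t ∈ adt (p+2) (p+2), (phi (p+2) t ⟨j-1, hq⟩)^2
          = (∑ i ∈ Ij, (t i : ℤ))^2 - 2*(j:ℤ)*(∑ i ∈ Ij, (t i : ℤ)) + (j:ℤ)^2 := by
        intro t _
        rw [hXY t]
        ring
      rw [Finset.sum_congr rfl expand2, Finset.sum_add_distrib, Finset.sum_sub_distrib,
        ← Finset.mul_sum, Finset.sum_const, nsmul_eq_mul, ← hNdef, hSI,
        aux_expand (p+2) (p+2) i0 i1 h01 Ij, hcard, ← hQdef, ← hPdef]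
      have hkm1 : (((p+2):ℕ):ℤ)-1 ≠ 0 := by
        have h2 : (2:ℤ) ≤ (((p+2):ℕ):ℤ) := by exact_mod_cast hk2
        intro h
        have h3 : (((p+2):ℕ):ℤ) = 1 := by linarith
        linarith
      refine mul_left_cancel₀ hkm1 ?_
      push_cast at hP hQN2 ⊢
      linear_combination (((((p:ℕ)):ℤ)+2+1)*(j:ℤ)*((j:ℤ)-1)) * hP
        + ((j:ℤ)*((((p:ℕ)):ℤ)+2-(j:ℤ))) * hQN2

/-- For every `k ≥ 1` and `1 ≤ j ≤ k`, the coordinate `B(k,j)` of a uniform bridge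
of `𝓑_k^{≥−1}` has mean `0` and variance `2 j (k − j) / (k + 1)`. -/
theorem stmt7 {Ω : Type} [MeasurableSpace Ω] (μ : Measure Ω) [IsProbabilityMeasure μ]
    (k : ℕ) (hk : 1 ≤ k) (j : ℕ) (hj : 1 ≤ j) (hjk : j ≤ k)
    (B : Ω → Fin k → ℤ)
    (hunif : ∀ b : Fin k → ℤ, μ {ω | B ω = b} =
      if IsBridge b then (Nat.card {b' : Fin k → ℤ // IsBridge b'} : ℝ≥0∞)⁻¹ else 0) :
    ∫ ω, (B ω ⟨j - 1, by omega⟩ : ℝ) ∂μ = 0 ∧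
    variance (fun ω => (B ω ⟨j - 1, by omega⟩ : ℝ)) μ
      = 2 * (j : ℝ) * ((k : ℝ) - (j : ℝ)) / ((k : ℝ) + 1) := by
  classical
  have hq : j - 1 < k := by omega
  obtain ⟨F, hF⟩ : ∃ F : Finset (Fin k → ℤ), F = (adt k k).image (phi k) := ⟨_, rfl⟩
  have hmem : ∀ b : Fin k → ℤ, IsBridge b ↔ b ∈ F := by
    intro b
    rw [hF, Finset.mem_image]
    constructor
    · intro hb
      obtain ⟨t, ht, hphi⟩ := aux_bridge_exists k b hb
      exact ⟨t, ht, hphi⟩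
    · rintro ⟨t, ht, rfl⟩
      exact aux_phi_isBridge k t ht
  obtain ⟨n, hn⟩ : ∃ n : ℕ, n = (adt k k).card := ⟨_, rfl⟩
  have hFcard : F.card = n := by
    rw [hF, Finset.card_image_of_injective _ (aux_phi_inj k), hn]
  have hNatCard : Nat.card {b' : Fin k → ℤ // IsBridge b'} = n := by
    have e : {b' : Fin k → ℤ // IsBridge b'} ≃ {b' : Fin k → ℤ // b' ∈ F} :=
      Equiv.subtypeEquivRight (fun b => hmem b)
    rw [Nat.card_congr e, Nat.card_eq_fintype_card, Fintype.card_coe, hFcard]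
  have hn1 : 1 ≤ n := by
    rw [hn]
    refine Finset.card_pos.mpr ⟨fun _ => 1, ?_⟩
    rw [Finset.Nat.mem_antidiagonalTuple]
    simp
  have hnne : ((n:ℝ≥0∞)) ≠ 0 := by
    simp only [ne_eq, Nat.cast_eq_zero]
    omega
  have hntop : ((n:ℝ≥0∞)) ≠ ⊤ := ENNReal.natCast_ne_top n
  have hunif' : ∀ b : Fin k → ℤ, μ {ω | B ω = b} = if b ∈ F then ((n:ℝ≥0∞))⁻¹ else 0 := by
    intro b
    rw [hunif b, hNatCard]
    by_cases h : IsBridge b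
    · rw [if_pos h, if_pos ((hmem b).mp h)]
    · rw [if_neg h, if_neg (fun hb => h ((hmem b).mpr hb))]
  obtain ⟨H, hHdef⟩ : ∃ H : (Fin k → ℤ) → Set Ω,
      H = fun b => toMeasurable μ {ω | B ω = b} := ⟨_, rfl⟩
  have hHmeas : ∀ b, MeasurableSet (H b) := by
    intro b; rw [hHdef]; exact measurableSet_toMeasurable μ _
  have hHsub : ∀ b, {ω | B ω = b} ⊆ H b := by
    intro b; rw [hHdef]; exact subset_toMeasurable μ _
  have hHmu : ∀ b ∈ F, μ (H b) = (n:ℝ≥0∞)⁻¹ := by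
    intro b hb
    rw [hHdef]
    exact (measure_toMeasurable _).trans (by rw [hunif' b, if_pos hb])
  have hrest : μ {ω | B ω ∉ F} = 0 := by
    have hsub : {ω | B ω ∉ F} ⊆ ⋃ b : {b : Fin k → ℤ // b ∉ F}, {ω | B ω = b.1} := by
      intro ω hω
      exact Set.mem_iUnion.mpr ⟨⟨B ω, hω⟩, rfl⟩
    refine measure_mono_null hsub (measure_iUnion_null ?_)
    rintro ⟨b, hb⟩
    rw [hunif' b, if_neg hb]
  have hUcover : μ (⋃ b ∈ F, H b) = 1 := by
    refine le_antisymm (le_trans (measure_mono (Set.subset_univ _)) (by simp)) ?_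
    have hsub : (Set.univ : Set Ω) ⊆ (⋃ b ∈ F, H b) ∪ {ω | B ω ∉ F} := by
      intro ω _
      by_cases h : B ω ∈ F
      · exact Or.inl (Set.mem_biUnion h (hHsub (B ω) rfl))
      · exact Or.inr h
    calc (1:ℝ≥0∞) = μ Set.univ := measure_univ.symm
      _ ≤ μ ((⋃ b ∈ F, H b) ∪ {ω | B ω ∉ F}) := measure_mono hsub
      _ ≤ μ (⋃ b ∈ F, H b) + μ {ω | B ω ∉ F} := measure_union_le _ _
      _ = μ (⋃ b ∈ F, H b) := by rw [hrest, add_zero]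
  have herase : ∀ b ∈ F, ∑ c ∈ F.erase b, μ (H c) = ((n-1 : ℕ) : ℝ≥0∞) * (n:ℝ≥0∞)⁻¹ := by
    intro b hb
    rw [Finset.sum_congr rfl (fun c hc => hHmu c (Finset.mem_of_mem_erase hc)),
      Finset.sum_const, Finset.card_erase_of_mem hb, hFcard, nsmul_eq_mul]
  have hinter : ∀ b ∈ F, ∀ b' ∈ F, b ≠ b' → μ (H b ∩ H b') = 0 := by
    intro b hb b' hb' hne
    have hcover2 : (⋃ c ∈ F, H c) ⊆ (H b \ H b') ∪ ⋃ c ∈ F.erase b, H c := by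
      intro x hx
      rw [Set.mem_iUnion₂] at hx
      obtain ⟨c, hc, hxc⟩ := hx
      by_cases hcb : c = b
      · subst hcb
        by_cases hxb' : x ∈ H b'
        · exact Or.inr (Set.mem_biUnion (Finset.mem_erase.mpr ⟨Ne.symm hne, hb'⟩) hxb')
        · exact Or.inl ⟨hxc, hxb'⟩
      · exact Or.inr (Set.mem_biUnion (Finset.mem_erase.mpr ⟨hcb, hc⟩) hxc)
    have h1 : (1:ℝ≥0∞) ≤ μ (H b \ H b') + ((n-1 : ℕ) : ℝ≥0∞) * (n:ℝ≥0∞)⁻¹ := by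
      calc (1:ℝ≥0∞) = μ (⋃ c ∈ F, H c) := hUcover.symm
        _ ≤ μ ((H b \ H b') ∪ ⋃ c ∈ F.erase b, H c) := measure_mono hcover2
        _ ≤ μ (H b \ H b') + μ (⋃ c ∈ F.erase b, H c) := measure_union_le _ _
        _ ≤ μ (H b \ H b') + ∑ c ∈ F.erase b, μ (H c) :=
            add_le_add_right (measure_biUnion_finset_le _ _) _
        _ = _ := by rw [herase b hb]
    have h2 : μ (H b \ H b') + μ (H b ∩ H b') = (n:ℝ≥0∞)⁻¹ := by
      rw [measure_diff_add_inter _ (hHmeas b'), hHmu b hb]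
    have h3 : (1:ℝ≥0∞) + μ (H b ∩ H b') ≤ 1 := by
      calc (1:ℝ≥0∞) + μ (H b ∩ H b')
          ≤ (μ (H b \ H b') + ((n-1 : ℕ):ℝ≥0∞) * (n:ℝ≥0∞)⁻¹) + μ (H b ∩ H b') :=
            add_le_add_left h1 _
        _ = (μ (H b \ H b') + μ (H b ∩ H b')) + ((n-1 : ℕ):ℝ≥0∞)*(n:ℝ≥0∞)⁻¹ := by ring
        _ = (n:ℝ≥0∞)⁻¹ + ((n-1 : ℕ):ℝ≥0∞)*(n:ℝ≥0∞)⁻¹ := by rw [h2]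
        _ = (1 + ((n-1 : ℕ):ℝ≥0∞)) * (n:ℝ≥0∞)⁻¹ := by ring
        _ = (n:ℝ≥0∞) * (n:ℝ≥0∞)⁻¹ := by
            congr 1
            rw [← Nat.cast_one, ← Nat.cast_add]
            congr 1
            omega
        _ = 1 := ENNReal.mul_inv_cancel hnne hntop
    have h4 : μ (H b ∩ H b') ≤ 0 :=
      ENNReal.le_of_add_le_add_left (by norm_num) (h3.trans_eq (add_zero (1:ℝ≥0∞)).symm)
    exact le_antisymm h4 zero_le
  have hHZ : ∀ b ∈ F, μ (H b ∩ ⋃ c ∈ F.erase b, H c) = 0 := by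
    intro b hb
    have he : H b ∩ ⋃ c ∈ F.erase b, H c = ⋃ c ∈ F.erase b, (H b ∩ H c) := by
      rw [Set.inter_iUnion₂]
    rw [he]
    refine le_antisymm (le_trans (measure_biUnion_finset_le _ _) ?_) zero_le
    refine le_trans (le_of_eq (Finset.sum_eq_zero (fun c hc => ?_))) (le_refl 0)
    exact hinter b hb c (Finset.mem_of_mem_erase hc) (Ne.symm (Finset.mem_erase.mp hc).1)
  obtain ⟨Pb, hPbd⟩ : ∃ Pb : (Fin k → ℤ) → Set Ω,
      Pb = fun b => H b \ ⋃ c ∈ F.erase b, H c := ⟨_, rfl⟩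
  have hPmeas : ∀ b, MeasurableSet (Pb b) := by
    intro b; rw [hPbd]
    exact (hHmeas b).diff ((F.erase b).measurableSet_biUnion (fun c _ => hHmeas c))
  have hPmu : ∀ b ∈ F, μ (Pb b) = (n:ℝ≥0∞)⁻¹ := by
    intro b hb
    rw [hPbd]
    exact (measure_diff_null' (hHZ b hb)).trans (hHmu b hb)
  have hPdisj : ∀ b ∈ F, ∀ b' ∈ F, b ≠ b' → ∀ ω, ω ∈ Pb b → ω ∉ Pb b' := by
    intro b hb b' hb' hne ω hωb hωb'
    rw [hPbd] at hωb hωb'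
    exact hωb.2 (Set.mem_biUnion (Finset.mem_erase.mpr ⟨Ne.symm hne, hb'⟩) hωb'.1)
  obtain ⟨Z, hZdef⟩ : ∃ Z : Set Ω,
      Z = {ω | B ω ∉ F} ∪ ⋃ b ∈ F, ({ω | B ω = b} \ Pb b) := ⟨_, rfl⟩
  have hZ : μ Z = 0 := by
    rw [hZdef]
    refine measure_union_null hrest ?_
    refine le_antisymm (le_trans (measure_biUnion_finset_le _ _) ?_) zero_le
    refine le_trans (le_of_eq (Finset.sum_eq_zero (fun b hb => ?_))) (le_refl 0)
    have hsub2 : {ω | B ω = b} \ Pb b ⊆ H b ∩ ⋃ c ∈ F.erase b, H c := by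
      intro ω hω
      obtain ⟨h1ω, h2ω⟩ := hω
      have hωH : ω ∈ H b := hHsub b h1ω
      refine ⟨hωH, ?_⟩
      by_contra hc
      rw [hPbd] at h2ω
      exact h2ω ⟨hωH, hc⟩
    exact measure_mono_null hsub2 (hHZ b hb)
  have hae : ∀ G : (Fin k → ℤ) → ℝ,
      (fun ω => G (B ω)) =ᵐ[μ]
        (fun ω => ∑ b ∈ F, Set.indicator (Pb b) (fun _ => G b) ω) := by
    intro G
    rw [Filter.EventuallyEq, ae_iff]
    refine measure_mono_null ?_ hZ
    intro ω hω
    rw [Set.mem_setOf_eq] at hω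
    rw [hZdef]
    by_contra hωZ
    apply hω
    simp only [Set.mem_union, Set.mem_setOf_eq, not_or] at hωZ
    obtain ⟨h1ω, h2ω⟩ := hωZ
    have hBF : B ω ∈ F := not_not.mp h1ω
    have hωP : ω ∈ Pb (B ω) := by
      by_contra hc
      exact h2ω (Set.mem_biUnion hBF ⟨rfl, hc⟩)
    have hsingle := Finset.sum_eq_single_of_mem (s := F)
      (f := fun b => Set.indicator (Pb b) (fun _ => G b) ω) (B ω) hBF
      (fun b hb hbne => Set.indicator_of_notMem
        (fun hmem' => hPdisj (B ω) hBF b hb (Ne.symm hbne) ω hωP hmem') (fun _ => G b))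
    rw [hsingle]
    exact (Set.indicator_of_mem hωP (fun _ => G (B ω))).symm
  have hint : ∀ G : (Fin k → ℤ) → ℝ,
      ∫ ω, G (B ω) ∂μ = (∑ b ∈ F, G b) / (n : ℝ) := by
    intro G
    rw [integral_congr_ae (hae G),
      integral_finset_sum _ (fun b _ => (integrable_const (G b)).indicator (hPmeas b))]
    have hterm : ∀ b ∈ F, ∫ ω, Set.indicator (Pb b) (fun _ => G b) ω ∂μ
        = G b * (n:ℝ)⁻¹ := by
      intro b hb
      rw [integral_indicator_const (G b) (hPmeas b), measureReal_def, hPmu b hb, smul_eq_mul, mul_comm,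
        ENNReal.toReal_inv, ENNReal.toReal_natCast]
    rw [Finset.sum_congr rfl hterm, ← Finset.sum_mul, div_eq_mul_inv]
  -- combinatorial sums
  have hsum0 : ∑ b ∈ F, ((b ⟨j-1, hq⟩ : ℤ) : ℝ) = 0 := by
    rw [hF, Finset.sum_image (fun x _ y _ h => aux_phi_inj k h)]
    have h1 := (aux_final k j hk hj hjk hq).1
    have h2 : ∑ t ∈ adt k k, ((phi k t ⟨j-1, hq⟩ : ℤ) : ℝ)
        = ((∑ t ∈ adt k k, phi k t ⟨j-1, hq⟩ : ℤ) : ℝ) := by push_cast; rfl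
    rw [h2, h1]
    simp
  have hsum2 : ((k:ℝ)+1) * ∑ b ∈ F, (((b ⟨j-1, hq⟩ : ℤ) : ℝ))^2
      = 2*(j:ℝ)*((k:ℝ)-(j:ℝ))*(n:ℝ) := by
    have h2 := (aux_final k j hk hj hjk hq).2
    have h3 := congrArg (Int.cast : ℤ → ℝ) h2
    push_cast at h3
    rw [hF, Finset.sum_image (fun x _ y _ h => aux_phi_inj k h)]
    have h4 : ∑ t ∈ adt k k, (((phi k t ⟨j-1, hq⟩ : ℤ) : ℝ))^2
        = ((∑ t ∈ adt k k, (phi k t ⟨j-1, hq⟩)^2 : ℤ) : ℝ) := by push_cast; rfl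
    rw [h4, hn]
    push_cast
    linarith [h3]
  have hmean : ∫ ω, ((B ω ⟨j-1, hq⟩ : ℤ) : ℝ) ∂μ = 0 := by
    have h := hint (fun b => ((b ⟨j-1, hq⟩ : ℤ) : ℝ))
    rw [hsum0] at h
    simpa using h
  constructor
  · exact hmean
  · -- variance
    obtain ⟨Y0, hY0⟩ : ∃ Y : Ω → ℝ,
        Y = fun ω => ∑ b ∈ F, Set.indicator (Pb b) (fun _ => ((b ⟨j-1, hq⟩ : ℤ) : ℝ)) ω :=
      ⟨_, rfl⟩
    have hae0 : (fun ω => ((B ω ⟨j-1, hq⟩ : ℤ) : ℝ)) =ᵐ[μ] Y0 := by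
      rw [hY0]
      exact hae (fun b => ((b ⟨j-1, hq⟩ : ℤ) : ℝ))
    have hY0memlp : MemLp Y0 2 μ := by
      rw [hY0]
      exact memLp_finset_sum F
        (fun b _ => memLp_indicator_const 2 (hPmeas b) _ (Or.inr (measure_ne_top μ _)))
    have hmeaneq : ∫ ω, ((B ω ⟨j-1, hq⟩ : ℤ) : ℝ) ∂μ = ∫ ω, Y0 ω ∂μ :=
      integral_congr_ae hae0
    have hvar : variance (fun ω => ((B ω ⟨j-1, hq⟩ : ℤ) : ℝ)) μ = variance Y0 μ := by
      unfold ProbabilityTheory.variance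
      congr 1
      show ∫⁻ ω, (‖((B ω ⟨j-1, hq⟩ : ℤ) : ℝ)
          - μ[fun ω' => ((B ω' ⟨j-1, hq⟩ : ℤ) : ℝ)]‖₊ : ℝ≥0∞) ^ 2 ∂μ
        = ∫⁻ ω, (‖Y0 ω - μ[Y0]‖₊ : ℝ≥0∞) ^ 2 ∂μ
      refine lintegral_congr_ae ?_
      filter_upwards [hae0] with ω hω
      rw [hω, hmeaneq]
    have hsqint : μ[Y0 ^ 2] = (∑ b ∈ F, (((b ⟨j-1, hq⟩ : ℤ) : ℝ))^2) / (n:ℝ) := by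
      have hsq_ae : (fun ω => (((B ω ⟨j-1, hq⟩ : ℤ) : ℝ))^2) =ᵐ[μ] (Y0 ^ 2) := by
        filter_upwards [hae0] with ω hω
        simp only [Pi.pow_apply]
        rw [hω]
      rw [← integral_congr_ae hsq_ae]
      exact hint (fun b => (((b ⟨j-1, hq⟩ : ℤ) : ℝ))^2)
    have hnR : (n:ℝ) ≠ 0 := by
      simp only [ne_eq, Nat.cast_eq_zero]
      omega
    have hkR : (k:ℝ) + 1 ≠ 0 := by positivity
    calc variance (fun ω => ((B ω ⟨j-1, hq⟩ : ℤ) : ℝ)) μ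
        = variance Y0 μ := hvar
      _ = μ[Y0 ^ 2] - μ[Y0] ^ 2 := variance_eq_sub hY0memlp
      _ = (∑ b ∈ F, (((b ⟨j-1, hq⟩ : ℤ) : ℝ))^2) / (n:ℝ) - 0 := by
          rw [hsqint, ← hmeaneq, hmean]
          norm_num
      _ = 2 * (j : ℝ) * ((k : ℝ) - (j : ℝ)) / ((k : ℝ) + 1) := by
          rw [sub_zero]
          rw [div_eq_div_iff hnR hkR]
          linarith [hsum2]
end

section
/- Let (X_i)_{i≥1} be i.i.d. random variables with values in ℤ_{≥−1} = {−1,0,1,2,…}, with P(X_1 = −1) > 0 and E[X_1] = 0. Define L_1(x) = x^2 P(X_1 ≥ x) and L(x) = Var(X_1 1_{|X_1| ≤ x}) for x > 0, and let (a_n) be a sequence of positive reals. Assume that L_1 and L are slowly varying at infinity, that L_1(x)/L(x) → 0 as x → ∞, that a_n → ∞, and that n L(a_n)/a_n^2 → 2 as n → ∞. Then for every ε > 0, n P(X_1 ≥ ε a_n) → 0 as n → ∞; consequently, a_n^{−1} max_{1≤i≤n} X_i converges to 0 in probability. -/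
open MeasureTheory ProbabilityTheory Filter
open scoped ENNReal Topology

/-!
Writing `P(X ≥ x) = L₁(x) / x²`, the normalisation `n L(aₙ) ~ 2 aₙ²` gives
`n P(X ≥ ε aₙ) ~ 2 ε⁻² · L₁(ε aₙ) / L(ε aₙ) · L(ε aₙ) / L(aₙ)`, which tends to `2 ε⁻² · 0 · 1`.
For the maximum, a union bound over the `n` summands bounds
`P(|max Xᵢ| > ε aₙ)` by `n P(X ≥ ε aₙ)`; the lower bound `Xᵢ ≥ -1` rules out a large negative
maximum once `ε aₙ > 1`.
-/

theorem tendsto_natCast_mul_tail_of_ratio_tendsto_zero {L₁ L p : ℝ → ℝ} {a : ℕ → ℝ} {C ε : ℝ}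
    (hε : 0 < ε) (hL₁ : ∀ x, 0 < x → L₁ x = x ^ 2 * p x)
    (hL : ∀ c, 0 < c → Tendsto (fun x => L (c * x) / L x) atTop (𝓝 1))
    (hratio : Tendsto (fun x => L₁ x / L x) atTop (𝓝 0))
    (hapos : ∀ n, 0 < a n) (ha : Tendsto a atTop atTop)
    (hnorm : Tendsto (fun n : ℕ => (n : ℝ) * L (a n) / a n ^ 2) atTop (𝓝 C)) :
    Tendsto (fun n : ℕ => (n : ℝ) * p (ε * a n)) atTop (𝓝 0) := by
  have hLne : ∀ᶠ x in atTop, L x ≠ 0 := by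
    have hL1 : Tendsto (fun x => L x / L x) atTop (𝓝 1) := by
      simpa only [one_mul] using hL 1 one_pos
    exact (hL1.eventually_ne one_ne_zero).mono fun x hx h0 => hx (by simp [h0])
  have haε : Tendsto (fun n => ε * a n) atTop atTop := ha.const_mul_atTop hε
  have hprod : Tendsto (fun n : ℕ => (n * L (a n) / a n ^ 2) * (L₁ (ε * a n) / L (ε * a n)) *
      (L (ε * a n) / L (a n)) * (ε ^ 2)⁻¹) atTop (𝓝 (C * 0 * 1 * (ε ^ 2)⁻¹)) :=
    ((hnorm.mul (hratio.comp haε)).mul ((hL ε hε).comp ha)).mul_const _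
  rw [mul_zero, zero_mul, zero_mul] at hprod
  refine hprod.congr' ?_
  filter_upwards [ha.eventually hLne, haε.eventually hLne] with n hLa hLεa
  have hεa : 0 < ε * a n := mul_pos hε (hapos n)
  rw [hL₁ _ hεa]
  have han : a n ≠ 0 := (hapos n).ne'
  field_simp
  rw [mul_comm (a n), mul_div_cancel_right₀ _ hLεa]

lemma le_of_lt_abs_inv_mul {m A ε : ℝ} (hm : -1 ≤ m) (hA : 0 < A) (hεA : 1 < ε * A)
    (h : ε < |A⁻¹ * m|) : ε * A ≤ m := by
  rw [abs_mul, abs_inv, abs_of_pos hA, inv_mul_eq_div, lt_div_iff₀ hA] at h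
  rcases abs_cases m with ⟨hm', _⟩ | ⟨hm', _⟩ <;> linarith

lemma measure_le_sup'_le_card_mul {Ω ι : Type*} [MeasurableSpace Ω] {μ : Measure Ω}
    {X : ι → Ω → ℤ} {Y : Ω → ℤ} {s : Finset ι} (hs : s.Nonempty)
    (hX : ∀ i ∈ s, IdentDistrib (X i) Y μ μ) (t : ℝ) :
    μ {ω | t ≤ ((s.sup' hs fun i => X i ω : ℤ) : ℝ)} ≤ s.card * μ {ω | t ≤ (Y ω : ℝ)} := by
  have hsub : {ω | t ≤ ((s.sup' hs fun i => X i ω : ℤ) : ℝ)} ⊆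
      ⋃ i ∈ s, {ω | t ≤ (X i ω : ℝ)} := by
    intro ω hω
    obtain ⟨i, hi, hmax⟩ := Finset.exists_mem_eq_sup' hs fun i => X i ω
    exact Set.mem_biUnion hi (by simpa [hmax] using hω)
  calc _ ≤ μ (⋃ i ∈ s, {ω | t ≤ (X i ω : ℝ)}) := measure_mono hsub
    _ ≤ ∑ i ∈ s, μ {ω | t ≤ (X i ω : ℝ)} := measure_biUnion_finset_le _ _
    _ = ∑ _i ∈ s, μ {ω | t ≤ (Y ω : ℝ)} :=
        Finset.sum_congr rfl fun i hi => (hX i hi).measure_mem_eq (s := {z : ℤ | t ≤ z}) trivial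
    _ = _ := by simp

theorem stmt11_general {Ω : Type} [MeasurableSpace Ω] (μ : Measure Ω) [IsProbabilityMeasure μ]
    (X : ℕ → Ω → ℤ) (hmeas : ∀ i, Measurable (X i)) (hval : ∀ i ω, -1 ≤ X i ω)
    (hident : ∀ i, Measure.map (X i) μ = Measure.map (X 0) μ)
    (L1 L : ℝ → ℝ)
    (hL1def : ∀ x : ℝ, 0 < x → L1 x = x ^ 2 * (μ {ω | x ≤ (X 0 ω : ℝ)}).toReal)
    (hLsv : ∀ c : ℝ, 0 < c → Tendsto (fun x => L (c * x) / L x) atTop (𝓝 1))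
    (hratio : Tendsto (fun x => L1 x / L x) atTop (𝓝 0))
    (a : ℕ → ℝ) (hapos : ∀ n, 0 < a n) (ha : Tendsto a atTop atTop)
    (hnorm : Tendsto (fun n : ℕ => (n : ℝ) * L (a n) / (a n) ^ 2) atTop (𝓝 2)) :
    (∀ ε : ℝ, 0 < ε →
      Tendsto (fun n : ℕ => (n : ℝ) * (μ {ω | ε * a n ≤ (X 0 ω : ℝ)}).toReal) atTop (𝓝 0)) ∧
    (∀ ε : ℝ, 0 < ε →
      Tendsto (fun n => μ {ω | ε <
          |(a (n + 1))⁻¹ *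
            (((Finset.range (n + 1)).sup' Finset.nonempty_range_add_one
                fun i => X i ω : ℤ) : ℝ)|})
        atTop (𝓝 0)) := by
  have htail : ∀ ε : ℝ, 0 < ε →
      Tendsto (fun n : ℕ => (n : ℝ) * (μ {ω | ε * a n ≤ (X 0 ω : ℝ)}).toReal) atTop (𝓝 0) :=
    fun ε hε => tendsto_natCast_mul_tail_of_ratio_tendsto_zero hε hL1def hLsv hratio hapos ha hnorm
  refine ⟨htail, fun ε hε => ?_⟩
  have hidentDistrib : ∀ i, IdentDistrib (X i) (X 0) μ μ :=
    fun i => ⟨(hmeas i).aemeasurable, (hmeas 0).aemeasurable, hident i⟩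
  have hbound : Tendsto (fun n : ℕ => ((n + 1 : ℕ) : ℝ≥0∞) *
      μ {ω | ε * a (n + 1) ≤ (X 0 ω : ℝ)}) atTop (𝓝 0) := by
    rw [← ENNReal.tendsto_toReal_iff (fun n => by finiteness) ENNReal.zero_ne_top]
    simpa only [ENNReal.toReal_mul, ENNReal.toReal_natCast, ENNReal.toReal_zero,
      Function.comp_def] using (htail ε hε).comp (tendsto_add_atTop_nat 1)
  have hlarge : ∀ᶠ n : ℕ in atTop, 1 < ε * a (n + 1) :=
    ((ha.const_mul_atTop hε).comp (tendsto_add_atTop_nat 1)).eventually_gt_atTop 1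
  refine tendsto_of_tendsto_of_tendsto_of_le_of_le' tendsto_const_nhds hbound
    (.of_forall fun n => zero_le) ?_
  filter_upwards [hlarge] with n hn
  have hunion := measure_le_sup'_le_card_mul (Finset.nonempty_range_add_one (n := n))
    (fun i _ => hidentDistrib i) (ε * a (n + 1))
  rw [Finset.card_range] at hunion
  refine (measure_mono fun ω hω => ?_).trans hunion
  obtain ⟨i, -, hmax⟩ := Finset.exists_mem_eq_sup' Finset.nonempty_range_add_one fun i => X i ω
  refine le_of_lt_abs_inv_mul ?_ (hapos (n + 1)) hn hω
  rw [hmax]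
  exact_mod_cast hval i ω

/-- Let `(X_i)` be i.i.d., `ℤ_{≥−1}`-valued, with `P(X_1 = −1) > 0` and `E[X_1] = 0`.
Let `L₁(x) = x² P(X_1 ≥ x)` and `L(x) = Var(X_1 1_{|X_1| ≤ x})` be slowly varying with
`L₁/L → 0`, and let `a_n → ∞` satisfy `n L(a_n)/a_n² → 2`. Then for every `ε > 0`,
`n P(X_1 ≥ ε a_n) → 0`; consequently `a_n⁻¹ max_{1≤i≤n} X_i → 0` in probability. -/
theorem stmt11 {Ω : Type} [MeasurableSpace Ω] (μ : Measure Ω) [IsProbabilityMeasure μ]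
    (X : ℕ → Ω → ℤ) (hmeas : ∀ i, Measurable (X i)) (hval : ∀ i ω, -1 ≤ X i ω)
    (hindep : iIndepFun X μ)
    (hident : ∀ i, Measure.map (X i) μ = Measure.map (X 0) μ)
    (hneg : 0 < μ {ω | X 0 ω = -1})
    (hint : Integrable (fun ω => (X 0 ω : ℝ)) μ)
    (hmean : ∫ ω, (X 0 ω : ℝ) ∂μ = 0)
    (L1 L : ℝ → ℝ)
    (hL1def : ∀ x : ℝ, 0 < x → L1 x = x ^ 2 * (μ {ω | x ≤ (X 0 ω : ℝ)}).toReal)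
    (hLdef : ∀ x : ℝ, 0 < x →
      L x = variance (fun ω => if |(X 0 ω : ℝ)| ≤ x then (X 0 ω : ℝ) else 0) μ)
    (hL1sv : ∀ c : ℝ, 0 < c → Tendsto (fun x => L1 (c * x) / L1 x) atTop (𝓝 1))
    (hLsv : ∀ c : ℝ, 0 < c → Tendsto (fun x => L (c * x) / L x) atTop (𝓝 1))
    (hratio : Tendsto (fun x => L1 x / L x) atTop (𝓝 0))
    (a : ℕ → ℝ) (hapos : ∀ n, 0 < a n) (ha : Tendsto a atTop atTop)
    (hnorm : Tendsto (fun n : ℕ => (n : ℝ) * L (a n) / (a n) ^ 2) atTop (𝓝 2)) :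
    (∀ ε : ℝ, 0 < ε →
      Tendsto (fun n : ℕ => (n : ℝ) * (μ {ω | ε * a n ≤ (X 0 ω : ℝ)}).toReal) atTop (𝓝 0)) ∧
    (∀ ε : ℝ, 0 < ε →
      Tendsto (fun n => μ {ω | ε <
          |(a (n + 1))⁻¹ *
            (((Finset.range (n + 1)).sup' Finset.nonempty_range_add_one
                fun i => X i ω : ℤ) : ℝ)|})
        atTop (𝓝 0)) :=
  stmt11_general μ X hmeas hval hident L1 L hL1def hLsv hratio a hapos ha hnorm
end

section
/- Let (X_i)_{i≥1} be i.i.d. random variables with values in ℤ_{≥−1} = {−1,0,1,2,…}, with P(X_1 = −1) > 0 and E[X_1] = 0. Define L_1(x) = x^2 P(X_1 ≥ x) and L(x) = Var(X_1 1_{|X_1| ≤ x}) for x > 0, and let (a_n) be a sequence of positive reals. Assume that L_1 and L are slowly varying at infinity, that L_1(x)/L(x) → 0 as x → ∞, that a_n → ∞, and that n L(a_n)/a_n^2 → 2 as n → ∞. Then a_n^{−2} ∑_{i=1}^{n} X_i^2 converges to 2 in probability as n → ∞. -/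
open MeasureTheory ProbabilityTheory Filter
open scoped ENNReal Topology

/-!
Truncate at level `δ aₙ`. The truncated second moment `E[X² 1_{|X| ≤ c}]` equals `L(c) + m(c)²`,
where `m(c) = E[X 1_{|X| ≤ c}] → E[X] = 0`; the atom at `-1` keeps `L` bounded below, so
`m(c)² = o(L(c))` and slow variation gives `n E[X² 1_{|X| ≤ δ aₙ}] / aₙ² → 2`. Chebyshev then
bounds the deviation of the truncated sum by a multiple of `δ²`, while, as `X ≥ -1`, some
`|Xᵢ| > δ aₙ` only with probability at most `n L₁(δ aₙ) / (δ aₙ)² → 0`, because `L₁ = o(L)`.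
Finally let `δ → 0`.
-/

noncomputable def truncAt (c z : ℝ) : ℝ := if |z| ≤ c then z else 0

lemma truncAt_of_abs_le {c z : ℝ} (h : |z| ≤ c) : truncAt c z = z := if_pos h

lemma measurable_truncAt (c : ℝ) : Measurable (truncAt c) :=
  Measurable.ite (measurableSet_le measurable_abs measurable_const) measurable_id measurable_const

lemma abs_truncAt_le_abs_left (c z : ℝ) : |truncAt c z| ≤ |c| := by
  unfold truncAt
  split_ifs with h
  · exact h.trans (le_abs_self c)
  · simp

lemma abs_truncAt_le_abs_right (c z : ℝ) : |truncAt c z| ≤ |z| := by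
  unfold truncAt
  split_ifs <;> simp

lemma truncAt_sq_le (c z : ℝ) : truncAt c z ^ 2 ≤ c ^ 2 :=
  sq_le_sq.mpr (abs_truncAt_le_abs_left c z)

lemma le_abs_sub_of_lt_abs_inv_mul_sub {d x y s ε : ℝ} (hd : 0 < d)
    (hx : ε < |d⁻¹ * x - s|) (hy : |d⁻¹ * y - s| ≤ ε / 2) : ε * d / 2 ≤ |x - y| := by
  have h : ε / 2 < d⁻¹ * |x - y| := by
    calc ε / 2 < |d⁻¹ * x - s| - |d⁻¹ * y - s| := by linarith
      _ ≤ |(d⁻¹ * x - s) - (d⁻¹ * y - s)| := abs_sub_abs_le_abs_sub _ _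
      _ = d⁻¹ * |x - y| := by rw [sub_sub_sub_cancel_right, ← mul_sub, abs_mul, abs_inv, abs_of_pos hd]
  linarith [(lt_inv_mul_iff₀ hd).mp h]

lemma tendsto_mul_comp_of_tendsto_div {L g : ℝ → ℝ} {u b : ℕ → ℝ} {ℓ r : ℝ}
    (hLb : Tendsto (fun n => u n * L (b n)) atTop (𝓝 ℓ))
    (hgL : Tendsto (fun x => g x / L x) atTop (𝓝 r)) (hb : Tendsto b atTop atTop)
    (hL : ∀ᶠ x in atTop, L x ≠ 0) :
    Tendsto (fun n => u n * g (b n)) atTop (𝓝 (ℓ * r)) := by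
  refine (hLb.mul (hgL.comp hb)).congr' ?_
  filter_upwards [hb.eventually hL] with n hn
  simp only [Function.comp_apply]
  field_simp

lemma ENNReal.tendsto_nhds_zero_of_forall_eventually_le_ofReal {u : ℕ → ℝ≥0∞}
    {B : ℝ → ℕ → ℝ} {β : ℝ → ℝ} (hβ : Tendsto β (𝓝[>] 0) (𝓝 0))
    (hB : ∀ δ > 0, Tendsto (B δ) atTop (𝓝 (β δ)))
    (hu : ∀ δ > 0, ∀ᶠ n in atTop, u n ≤ ENNReal.ofReal (B δ n)) :
    Tendsto u atTop (𝓝 0) := by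
  refine ENNReal.tendsto_nhds_zero.mpr fun η hη => ?_
  obtain ⟨δ, hβδ, hδ⟩ : ∃ δ, ENNReal.ofReal (β δ) < η ∧ 0 < δ :=
    (((ENNReal.continuous_ofReal.tendsto 0).comp hβ).eventually
      (gt_mem_nhds (by simpa using hη))).and self_mem_nhdsWithin |>.exists
  filter_upwards [hu δ hδ, ((ENNReal.continuous_ofReal.tendsto _).comp (hB δ hδ)).eventually
    (gt_mem_nhds hβδ)] with n hun hBn
  exact hun.trans hBn.le

section Truncation

variable {Ω : Type*} [MeasurableSpace Ω] {μ : Measure Ω} {Z : Ω → ℝ}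

lemma memLp_truncAt_comp [IsFiniteMeasure μ] (hZ : AEMeasurable Z μ) (c : ℝ) (p : ℝ≥0∞) :
    MemLp (fun ω => truncAt c (Z ω)) p μ :=
  MemLp.of_bound ((measurable_truncAt c).comp_aemeasurable hZ).aestronglyMeasurable |c|
    (ae_of_all _ fun ω => by simpa using abs_truncAt_le_abs_left c (Z ω))

lemma memLp_truncAt_sq_comp [IsFiniteMeasure μ] (hZ : AEMeasurable Z μ) (c : ℝ) (p : ℝ≥0∞) :
    MemLp (fun ω => truncAt c (Z ω) ^ 2) p μ :=
  MemLp.of_bound (((measurable_truncAt c).pow_const 2).comp_aemeasurable hZ).aestronglyMeasurable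
    (c ^ 2) (ae_of_all _ fun ω => by simpa using truncAt_sq_le c (Z ω))

lemma tendsto_integral_truncAt (hZ : Integrable Z μ) :
    Tendsto (fun c => ∫ ω, truncAt c (Z ω) ∂μ) atTop (𝓝 (∫ ω, Z ω ∂μ)) :=
  tendsto_integral_filter_of_dominated_convergence (fun ω => |Z ω|)
    (Eventually.of_forall fun c =>
      ((measurable_truncAt c).comp_aemeasurable hZ.aemeasurable).aestronglyMeasurable)
    (Eventually.of_forall fun c => ae_of_all _ fun ω => abs_truncAt_le_abs_right c (Z ω))
    hZ.abs
    (ae_of_all _ fun ω => tendsto_const_nhds.congr' <|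
      (eventually_ge_atTop |Z ω|).mono fun _ hc => (truncAt_of_abs_le hc).symm)

lemma tendsto_sq_integral_truncAt (hint : Integrable Z μ) (hmean : ∫ ω, Z ω ∂μ = 0) :
    Tendsto (fun c => (∫ ω, truncAt c (Z ω) ∂μ) ^ 2) atTop (𝓝 0) := by
  simpa [hmean] using (tendsto_integral_truncAt hint).pow 2

variable [IsProbabilityMeasure μ]

lemma integral_truncAt_sq (hZ : AEMeasurable Z μ) (c : ℝ) :
    ∫ ω, truncAt c (Z ω) ^ 2 ∂μ =
      variance (fun ω => truncAt c (Z ω)) μ + (∫ ω, truncAt c (Z ω) ∂μ) ^ 2 := by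
  rw [variance_eq_sub (memLp_truncAt_comp hZ c 2)]
  simp only [Pi.pow_apply, sub_add_cancel]

lemma variance_truncAt_sq_le (hZ : AEMeasurable Z μ) (c : ℝ) :
    variance (fun ω => truncAt c (Z ω) ^ 2) μ ≤ c ^ 2 * ∫ ω, truncAt c (Z ω) ^ 2 ∂μ := by
  have h2 := memLp_truncAt_sq_comp hZ c 2 (μ := μ)
  calc variance (fun ω => truncAt c (Z ω) ^ 2) μ ≤ ∫ ω, (truncAt c (Z ω) ^ 2) ^ 2 ∂μ :=
        variance_le_expectation_sq h2.aestronglyMeasurable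
    _ ≤ ∫ ω, c ^ 2 * truncAt c (Z ω) ^ 2 ∂μ :=
        integral_mono h2.integrable_sq ((h2.integrable one_le_two).const_mul _) fun ω => by
          rw [sq (truncAt c (Z ω) ^ 2)]
          exact mul_le_mul_of_nonneg_right (truncAt_sq_le c _) (sq_nonneg _)
    _ = c ^ 2 * ∫ ω, truncAt c (Z ω) ^ 2 ∂μ := integral_const_mul _ _

lemma exists_pos_eventually_le_variance_truncAt (hZ : Measurable Z) (hint : Integrable Z μ)
    (hmean : ∫ ω, Z ω ∂μ = 0) {z₀ : ℝ} (hz₀ : z₀ ≠ 0) (hatom : 0 < μ {ω | Z ω = z₀}) :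
    ∃ κ > 0, ∀ᶠ c in atTop, κ ≤ variance (fun ω => truncAt c (Z ω)) μ := by
  set p := z₀ ^ 2 * μ.real {ω | Z ω = z₀}
  have hp : 0 < p := mul_pos (by positivity) (ENNReal.toReal_pos hatom.ne' (measure_ne_top _ _))
  refine ⟨p / 2, half_pos hp, ?_⟩
  filter_upwards [(tendsto_sq_integral_truncAt hint hmean).eventually (ge_mem_nhds (half_pos hp)),
    eventually_ge_atTop |z₀|] with c hmc hc
  have hq : p ≤ ∫ ω, truncAt c (Z ω) ^ 2 ∂μ := by
    have hs : MeasurableSet {ω | Z ω = z₀} := hZ (measurableSet_singleton z₀)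
    calc p = ∫ ω in {ω | Z ω = z₀}, truncAt c (Z ω) ^ 2 ∂μ := by
          rw [setIntegral_congr_fun hs fun ω (hω : Z ω = z₀) => by rw [hω, truncAt_of_abs_le hc]]
          simp [p, mul_comm]
      _ ≤ ∫ ω, truncAt c (Z ω) ^ 2 ∂μ :=
          setIntegral_le_integral (memLp_truncAt_comp hZ.aemeasurable c 2).integrable_sq
            (ae_of_all _ fun ω => sq_nonneg _)
  linarith [integral_truncAt_sq (μ := μ) hZ.aemeasurable c]

lemma tendsto_mul_integral_truncAt_sq (hZ : Measurable Z) (hint : Integrable Z μ)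
    (hmean : ∫ ω, Z ω ∂μ = 0) {z₀ : ℝ} (hz₀ : z₀ ≠ 0) (hatom : 0 < μ {ω | Z ω = z₀})
    {u b : ℕ → ℝ} {ℓ : ℝ} (hb : Tendsto b atTop atTop)
    (h : Tendsto (fun n => u n * variance (fun ω => truncAt (b n) (Z ω)) μ) atTop (𝓝 ℓ)) :
    Tendsto (fun n => u n * ∫ ω, truncAt (b n) (Z ω) ^ 2 ∂μ) atTop (𝓝 ℓ) := by
  obtain ⟨κ, hκ, hVκ⟩ := exists_pos_eventually_le_variance_truncAt hZ hint hmean hz₀ hatom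
  have hmV : Tendsto (fun c => (∫ ω, truncAt c (Z ω) ∂μ) ^ 2
      / variance (fun ω => truncAt c (Z ω)) μ) atTop (𝓝 0) := by
    refine squeeze_zero'
      (Eventually.of_forall fun c => div_nonneg (sq_nonneg _) (variance_nonneg _ _)) ?_
      (by simpa using (tendsto_sq_integral_truncAt hint hmean).div_const κ)
    filter_upwards [hVκ] with c hc
    exact div_le_div_of_nonneg_left (sq_nonneg _) hκ hc
  have hm := tendsto_mul_comp_of_tendsto_div h hmV hb (hVκ.mono fun c hc => (hκ.trans_le hc).ne')
  simpa [integral_truncAt_sq hZ.aemeasurable, mul_add] using h.add hm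

end Truncation

section IID

variable {Ω : Type*} [MeasurableSpace Ω] {μ : Measure Ω} {Y : ℕ → Ω → ℝ}

lemma variance_sum_comp_eq_of_iIndepFun (hindep : iIndepFun Y μ)
    (hident : ∀ i, IdentDistrib (Y i) (Y 0) μ μ) {f : ℝ → ℝ} (hf : Measurable f)
    (hf2 : MemLp (fun ω => f (Y 0 ω)) 2 μ) (n : ℕ) :
    variance (∑ i ∈ Finset.range n, fun ω => f (Y i ω)) μ
      = n * variance (fun ω => f (Y 0 ω)) μ := by
  have hfY : ∀ i, IdentDistrib (fun ω => f (Y i ω)) (fun ω => f (Y 0 ω)) μ μ :=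
    fun i => (hident i).comp hf
  rw [IndepFun.variance_sum (fun i _ => (hfY i).symm.memLp_snd hf2)
    fun i _ j _ hij => (hindep.comp (fun _ => f) fun _ => hf).indepFun hij]
  simp [(hfY _).variance_eq]

variable [IsProbabilityMeasure μ]

lemma measure_le_abs_sum_sq_sub_le (hindep : iIndepFun Y μ)
    (hident : ∀ i, IdentDistrib (Y i) (Y 0) μ μ) (n : ℕ) (c : ℝ) {t : ℝ} (ht : 0 < t) :
    μ {ω | t ≤ |∑ i ∈ Finset.range n, Y i ω ^ 2 - n * ∫ ω, truncAt c (Y 0 ω) ^ 2 ∂μ|}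
      ≤ n * μ {ω | c < |Y 0 ω|}
        + ENNReal.ofReal (n * (c ^ 2 * ∫ ω, truncAt c (Y 0 ω) ^ 2 ∂μ) / t ^ 2) := by
  set T := ∑ i ∈ Finset.range n, fun ω => truncAt c (Y i ω) ^ 2
  have hf : Measurable fun z => truncAt c z ^ 2 := (measurable_truncAt c).pow_const 2
  have hfY : ∀ i, MemLp (fun ω => truncAt c (Y i ω) ^ 2) 2 μ := fun i =>
    memLp_truncAt_sq_comp (hident i).aemeasurable_fst c 2
  have hET : μ[T] = n * ∫ ω, truncAt c (Y 0 ω) ^ 2 ∂μ := by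
    have hfY0 : ∀ i, ∫ ω, truncAt c (Y i ω) ^ 2 ∂μ = ∫ ω, truncAt c (Y 0 ω) ^ 2 ∂μ := fun i =>
      ((hident i).comp hf).integral_eq
    change ∫ ω, (∑ i ∈ Finset.range n, fun ω => truncAt c (Y i ω) ^ 2) ω ∂μ = _
    simp only [Finset.sum_apply]
    rw [integral_finsetSum _ fun i _ => (hfY i).integrable one_le_two]
    simp [hfY0]
  have hVT : variance T μ ≤ n * (c ^ 2 * ∫ ω, truncAt c (Y 0 ω) ^ 2 ∂μ) := by
    rw [variance_sum_comp_eq_of_iIndepFun hindep hident hf (hfY 0)]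
    gcongr
    exact variance_truncAt_sq_le (hident 0).aemeasurable_fst c
  have hsub : {ω | t ≤ |∑ i ∈ Finset.range n, Y i ω ^ 2 - n * ∫ ω, truncAt c (Y 0 ω) ^ 2 ∂μ|}
      ⊆ (⋃ i ∈ Finset.range n, {ω | c < |Y i ω|}) ∪ {ω | t ≤ |T ω - μ[T]|} := by
    intro ω hω
    by_cases hbig : ∃ i ∈ Finset.range n, c < |Y i ω|
    · left
      simpa using hbig
    · right
      push Not at hbig
      have hTω : T ω = ∑ i ∈ Finset.range n, Y i ω ^ 2 := by
        simp only [T, Finset.sum_apply]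
        exact Finset.sum_congr rfl fun i hi => by rw [truncAt_of_abs_le (hbig i hi)]
      simpa [hTω, hET] using hω
  have hYY : ∀ i, μ {ω | c < |Y i ω|} = μ {ω | c < |Y 0 ω|} := fun i =>
    (hident i).measure_mem_eq (measurableSet_lt measurable_const measurable_abs)
  calc _ ≤ μ (⋃ i ∈ Finset.range n, {ω | c < |Y i ω|}) + μ {ω | t ≤ |T ω - μ[T]|} :=
        (measure_mono hsub).trans (measure_union_le _ _)
    _ ≤ ∑ i ∈ Finset.range n, μ {ω | c < |Y i ω|} + ENNReal.ofReal (variance T μ / t ^ 2) :=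
        add_le_add (measure_biUnion_finset_le _ _)
          (meas_ge_le_variance_div_sq (memLp_finsetSum' _ fun i _ => hfY i) ht)
    _ ≤ _ := by
        simp only [hYY, Finset.sum_const, Finset.card_range, nsmul_eq_mul]
        gcongr

theorem tendsto_measure_lt_abs_inv_sq_mul_sum_sq_sub (hindep : iIndepFun Y μ)
    (hident : ∀ i, IdentDistrib (Y i) (Y 0) μ μ) {b : ℕ → ℝ} (hb : ∀ n, 0 < b n) {s : ℝ}
    (htail : ∀ δ > 0, Tendsto (fun n : ℕ => n * μ.real {ω | δ * b n < |Y 0 ω|}) atTop (𝓝 0))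
    (hsq : ∀ δ > 0, Tendsto (fun n : ℕ => n / b n ^ 2 * ∫ ω, truncAt (δ * b n) (Y 0 ω) ^ 2 ∂μ)
      atTop (𝓝 s))
    {ε : ℝ} (hε : 0 < ε) :
    Tendsto (fun n : ℕ => μ {ω | ε < |(b n ^ 2)⁻¹ * ∑ i ∈ Finset.range n, Y i ω ^ 2 - s|})
      atTop (𝓝 0) := by
  -- union bound for `|Yᵢ| > δ bₙ`, plus Chebyshev at deviation `ε bₙ² / 2` for the sum truncated
  -- at `δ bₙ`, whose variance is at most `n (δ bₙ)² q`
  refine ENNReal.tendsto_nhds_zero_of_forall_eventually_le_ofReal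
    (B := fun δ n => n * μ.real {ω | δ * b n < |Y 0 ω|}
      + 4 * δ ^ 2 / ε ^ 2 * (n / b n ^ 2 * ∫ ω, truncAt (δ * b n) (Y 0 ω) ^ 2 ∂μ))
    (β := fun δ => 4 * δ ^ 2 / ε ^ 2 * s) ?_
    (fun δ hδ => by simpa using (htail δ hδ).add ((hsq δ hδ).const_mul (4 * δ ^ 2 / ε ^ 2)))
    fun δ hδ => ?_
  · exact tendsto_nhdsWithin_of_tendsto_nhds (Continuous.tendsto' (by fun_prop) 0 0 (by simp))
  filter_upwards [(hsq δ hδ).eventually (Metric.closedBall_mem_nhds s (half_pos hε))] with n hn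
  set q := ∫ ω, truncAt (δ * b n) (Y 0 ω) ^ 2 ∂μ
  have hb2 : 0 < b n ^ 2 := pow_pos (hb n) 2
  rw [Real.dist_eq] at hn
  have hn' : |(b n ^ 2)⁻¹ * (n * q) - s| ≤ ε / 2 := by
    rwa [inv_mul_eq_div, mul_div_right_comm]
  have hsub : {ω | ε < |(b n ^ 2)⁻¹ * ∑ i ∈ Finset.range n, Y i ω ^ 2 - s|}
      ⊆ {ω | ε * b n ^ 2 / 2 ≤ |∑ i ∈ Finset.range n, Y i ω ^ 2 - n * q|} :=
    fun ω hω => le_abs_sub_of_lt_abs_inv_mul_sub hb2 hω hn'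
  calc _ ≤ _ := measure_mono hsub
    _ ≤ _ := measure_le_abs_sum_sq_sub_le hindep hident n (δ * b n) (by positivity)
    _ = _ := by
      rw [ENNReal.ofReal_add (by positivity) (mul_nonneg (by positivity) (by positivity)),
        ENNReal.ofReal_mul (Nat.cast_nonneg n), ENNReal.ofReal_natCast, measureReal_def,
        ENNReal.ofReal_toReal (measure_ne_top _ _)]
      congr 2
      field_simp
      ring

end IID

lemma tendsto_natCast_mul_measureReal_lt_abs {Ω : Type*} [MeasurableSpace Ω] {μ : Measure Ω}
    [IsFiniteMeasure μ] {Z : Ω → ℝ} (hval : ∀ ω, -1 ≤ Z ω) {L₁ : ℝ → ℝ}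
    (hL₁ : ∀ x, 0 < x → L₁ x = x ^ 2 * μ.real {ω | x ≤ Z ω}) {b : ℕ → ℝ} (hb : ∀ n, 0 < b n)
    (hb_top : Tendsto b atTop atTop)
    (h : Tendsto (fun n : ℕ => n / b n ^ 2 * L₁ (b n)) atTop (𝓝 0)) :
    Tendsto (fun n : ℕ => n * μ.real {ω | b n < |Z ω|}) atTop (𝓝 0) := by
  refine squeeze_zero' (Eventually.of_forall fun n => by positivity) ?_ h
  filter_upwards [hb_top.eventually_ge_atTop 1] with n hn
  have hsub : {ω | b n < |Z ω|} ⊆ {ω | b n ≤ Z ω} := fun ω (hω : b n < |Z ω|) => by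
    show b n ≤ Z ω
    rcases abs_cases (Z ω) with ⟨h, _⟩ | ⟨h, _⟩ <;> linarith [hval ω]
  rw [hL₁ _ (hb n), ← mul_assoc, div_mul_cancel₀ _ (pow_pos (hb n) 2).ne']
  gcongr
  exact measure_ne_top μ _

theorem stmt12_general {Ω : Type} [MeasurableSpace Ω] (μ : Measure Ω) [IsProbabilityMeasure μ]
    (X : ℕ → Ω → ℤ) (hmeas : ∀ i, Measurable (X i)) (hval : ∀ i ω, -1 ≤ X i ω)
    (hindep : iIndepFun X μ)
    (hident : ∀ i, Measure.map (X i) μ = Measure.map (X 0) μ)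
    (hneg : 0 < μ {ω | X 0 ω = -1})
    (hint : Integrable (fun ω => (X 0 ω : ℝ)) μ)
    (hmean : ∫ ω, (X 0 ω : ℝ) ∂μ = 0)
    (L1 L : ℝ → ℝ)
    (hL1def : ∀ x : ℝ, 0 < x → L1 x = x ^ 2 * (μ {ω | x ≤ (X 0 ω : ℝ)}).toReal)
    (hLdef : ∀ x : ℝ, 0 < x →
      L x = variance (fun ω => if |(X 0 ω : ℝ)| ≤ x then (X 0 ω : ℝ) else 0) μ)
    (hLsv : ∀ c : ℝ, 0 < c → Tendsto (fun x => L (c * x) / L x) atTop (𝓝 1))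
    (hratio : Tendsto (fun x => L1 x / L x) atTop (𝓝 0))
    (a : ℕ → ℝ) (hapos : ∀ n, 0 < a n) (ha : Tendsto a atTop atTop)
    (hnorm : Tendsto (fun n : ℕ => (n : ℝ) * L (a n) / (a n) ^ 2) atTop (𝓝 2)) :
    ∀ ε : ℝ, 0 < ε →
      Tendsto (fun n : ℕ => μ {ω | ε <
          |((a n) ^ 2)⁻¹ * (∑ i ∈ Finset.range n, (X i ω : ℝ) ^ 2) - 2|})
        atTop (𝓝 0) := by
  intro ε hε
  have hZ : Measurable fun ω => (X 0 ω : ℝ) := Measurable.of_discrete.comp (hmeas 0)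
  have hatom : 0 < μ {ω | (X 0 ω : ℝ) = -1} := by exact_mod_cast hneg
  obtain ⟨κ, hκ, hVκ⟩ := exists_pos_eventually_le_variance_truncAt hZ hint hmean (by norm_num) hatom
  have hLne : ∀ᶠ x in atTop, L x ≠ 0 := by
    filter_upwards [hVκ, eventually_gt_atTop 0] with x hx hx0
    exact hLdef x hx0 ▸ (hκ.trans_le hx).ne'
  have hLa : ∀ δ > 0, Tendsto (fun n : ℕ => n / a n ^ 2 * L (δ * a n)) atTop (𝓝 2) :=
    fun δ hδ => by
      simpa using tendsto_mul_comp_of_tendsto_div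
        (by simpa only [mul_div_right_comm] using hnorm) (hLsv δ hδ) ha hLne
  refine tendsto_measure_lt_abs_inv_sq_mul_sum_sq_sub (Y := fun i ω => (X i ω : ℝ))
    (hindep.comp (fun _ => Int.cast) fun _ => Measurable.of_discrete)
    (fun i => IdentDistrib.comp ⟨(hmeas i).aemeasurable, (hmeas 0).aemeasurable, hident i⟩
      Measurable.of_discrete) hapos (fun δ hδ => ?_) (fun δ hδ => ?_) hε
  · have hL1a := tendsto_mul_comp_of_tendsto_div (hLa δ hδ) hratio (ha.const_mul_atTop hδ) hLne
    refine tendsto_natCast_mul_measureReal_lt_abs (fun ω => by exact_mod_cast hval 0 ω)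
      (fun x hx => (hL1def x hx).trans (by rw [measureReal_def])) (fun n => mul_pos hδ (hapos n))
      (ha.const_mul_atTop hδ) ?_
    have h := hL1a.const_mul (δ ^ 2)⁻¹
    rw [mul_zero, mul_zero] at h
    refine h.congr fun n => ?_
    field_simp
  · refine tendsto_mul_integral_truncAt_sq hZ hint hmean (by norm_num) hatom
      (ha.const_mul_atTop hδ) ((hLa δ hδ).congr fun n => ?_)
    rw [hLdef _ (mul_pos hδ (hapos n))]
    rfl

/-- Let `(X_i)` be i.i.d., `ℤ_{≥−1}`-valued, with `P(X_1 = −1) > 0` and `E[X_1] = 0`.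
Let `L₁(x) = x² P(X_1 ≥ x)` and `L(x) = Var(X_1 1_{|X_1| ≤ x})` be slowly varying with
`L₁/L → 0`, and let `a_n → ∞` satisfy `n L(a_n)/a_n² → 2`. Then
`a_n⁻² ∑_{i=1}^n X_i²` converges to `2` in probability. -/
theorem stmt12 {Ω : Type} [MeasurableSpace Ω] (μ : Measure Ω) [IsProbabilityMeasure μ]
    (X : ℕ → Ω → ℤ) (hmeas : ∀ i, Measurable (X i)) (hval : ∀ i ω, -1 ≤ X i ω)
    (hindep : iIndepFun X μ)
    (hident : ∀ i, Measure.map (X i) μ = Measure.map (X 0) μ)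
    (hneg : 0 < μ {ω | X 0 ω = -1})
    (hint : Integrable (fun ω => (X 0 ω : ℝ)) μ)
    (hmean : ∫ ω, (X 0 ω : ℝ) ∂μ = 0)
    (L1 L : ℝ → ℝ)
    (hL1def : ∀ x : ℝ, 0 < x → L1 x = x ^ 2 * (μ {ω | x ≤ (X 0 ω : ℝ)}).toReal)
    (hLdef : ∀ x : ℝ, 0 < x →
      L x = variance (fun ω => if |(X 0 ω : ℝ)| ≤ x then (X 0 ω : ℝ) else 0) μ)
    (hL1sv : ∀ c : ℝ, 0 < c → Tendsto (fun x => L1 (c * x) / L1 x) atTop (𝓝 1))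
    (hLsv : ∀ c : ℝ, 0 < c → Tendsto (fun x => L (c * x) / L x) atTop (𝓝 1))
    (hratio : Tendsto (fun x => L1 x / L x) atTop (𝓝 0))
    (a : ℕ → ℝ) (hapos : ∀ n, 0 < a n) (ha : Tendsto a atTop atTop)
    (hnorm : Tendsto (fun n : ℕ => (n : ℝ) * L (a n) / (a n) ^ 2) atTop (𝓝 2)) :
    ∀ ε : ℝ, 0 < ε →
      Tendsto (fun n : ℕ => μ {ω | ε <
          |((a n) ^ 2)⁻¹ * (∑ i ∈ Finset.range n, (X i ω : ℝ) ^ 2) - 2|})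
        atTop (𝓝 0) :=
  stmt12_general μ X hmeas hval hindep hident hneg hint hmean L1 L hL1def hLdef hLsv hratio a hapos
    ha hnorm
end

section
/- Let (X_i)_{i≥1} be i.i.d. random variables with values in ℤ_{≥−1} = {−1,0,1,2,…}, with P(X_1 = −1) > 0 and E[X_1] = 0. Define L_1(x) = x^2 P(X_1 ≥ x) and L(x) = Var(X_1 1_{|X_1| ≤ x}) for x > 0, and let (a_n) be a sequence of positive reals. Assume that L_1 and L are slowly varying at infinity, that L_1(x)/L(x) → 0 as x → ∞, that a_n → ∞, and that n L(a_n)/a_n^2 → 2 as n → ∞. Then a_n^{−2} ∑_{i=1}^{n} X_i (X_i + 1) converges to 2 in probability as n → ∞. -/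
open MeasureTheory ProbabilityTheory Filter
open scoped ENNReal Topology

/-- Truncated value function on `ℤ`. -/
noncomputable def trunc1 (t : ℝ) (k : ℤ) : ℝ := if |(k : ℝ)| ≤ t then (k : ℝ) else 0

/-- Truncated square function on `ℤ`. -/
noncomputable def trunc2 (t : ℝ) (k : ℤ) : ℝ := if |(k : ℝ)| ≤ t then (k : ℝ) ^ 2 else 0

lemma trunc1_sq (t : ℝ) (k : ℤ) : (trunc1 t k) ^ 2 = trunc2 t k := by
  unfold trunc1 trunc2; split_ifs <;> simp

lemma trunc2_nonneg (t : ℝ) (k : ℤ) : 0 ≤ trunc2 t k := by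
  unfold trunc2; split_ifs <;> positivity

lemma abs_trunc1_le (t : ℝ) (ht : 0 ≤ t) (k : ℤ) : |trunc1 t k| ≤ t := by
  unfold trunc1; split_ifs with h
  · exact h
  · simpa using ht

lemma abs_trunc1_le_abs (t : ℝ) (k : ℤ) : |trunc1 t k| ≤ |(k : ℝ)| := by
  unfold trunc1; split_ifs with h
  · exact le_refl _
  · simp

lemma abs_trunc2_le (t : ℝ) (ht : 0 ≤ t) (k : ℤ) : |trunc2 t k| ≤ t ^ 2 := by
  unfold trunc2; split_ifs with h
  · rw [abs_of_nonneg (sq_nonneg _), ← sq_abs]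
    exact pow_le_pow_left₀ (abs_nonneg _) h 2
  · simpa using sq_nonneg t

lemma abs_trunc2_sq_le (t : ℝ) (ht : 0 ≤ t) (k : ℤ) : |(trunc2 t k) ^ 2| ≤ t ^ 4 := by
  rw [abs_of_nonneg (sq_nonneg _)]
  calc (trunc2 t k) ^ 2 ≤ (t ^ 2) ^ 2 := by
        apply sq_le_sq'
        · nlinarith [abs_trunc2_le t ht k, abs_le.1 (abs_trunc2_le t ht k), sq_nonneg t]
        · exact (abs_le.1 (abs_trunc2_le t ht k)).2
    _ = t ^ 4 := by ring

/-- key integer fact: if `k ≥ -1` and `|k| > t ≥ 1` then `k ≥ t`. -/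
lemma int_ge_of_abs_gt {k : ℤ} (hk : -1 ≤ k) {t : ℝ} (ht : 1 ≤ t)
    (h : t < |(k : ℝ)|) : t ≤ (k : ℝ) := by
  rcases le_or_gt (k : ℝ) 0 with h0 | h0
  · have hk' : (-1 : ℝ) ≤ (k : ℝ) := by exact_mod_cast hk
    have : |(k : ℝ)| ≤ 1 := abs_le.2 ⟨by linarith, by linarith⟩
    linarith
  · rw [abs_of_pos h0] at h; linarith

/-- key pointwise bound for the fourth moment truncation argument. -/
lemma trunc_sq_bound {k : ℤ} (hk : -1 ≤ k) {c t : ℝ} (hc : 1 ≤ c) (hct : c ≤ t) :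
    (trunc2 t k) ^ 2 ≤ c ^ 2 * trunc2 t k + t ^ 4 * (if c ≤ (k : ℝ) then (1 : ℝ) else 0) := by
  have h0 : 0 ≤ (if c ≤ (k : ℝ) then (1 : ℝ) else 0) := by split_ifs <;> norm_num
  have ht : 0 ≤ t := by linarith
  rcases le_or_gt (|(k : ℝ)|) c with h1 | h1
  · -- |k| ≤ c : trunc2 t k = k^2 and k^4 ≤ c^2 k^2
    have h2 : |(k : ℝ)| ≤ t := le_trans h1 hct
    have h3 : trunc2 t k = (k : ℝ) ^ 2 := if_pos h2
    have h4 : (k : ℝ) ^ 2 ≤ c ^ 2 := by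
      rw [← sq_abs]; exact pow_le_pow_left₀ (abs_nonneg _) h1 2
    have h5 : ((k : ℝ) ^ 2) ^ 2 ≤ c ^ 2 * (k : ℝ) ^ 2 := by nlinarith [sq_nonneg (k : ℝ)]
    rw [h3]
    nlinarith [mul_nonneg (by positivity : (0:ℝ) ≤ t ^ 4) h0]
  · rcases le_or_gt (|(k : ℝ)|) t with h2 | h2
    · -- c < |k| ≤ t : indicator is 1 and k^4 ≤ t^4
      have h3 : trunc2 t k = (k : ℝ) ^ 2 := if_pos h2
      have h4 : c ≤ (k : ℝ) := int_ge_of_abs_gt hk hc h1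
      have h5 : (if c ≤ (k : ℝ) then (1 : ℝ) else 0) = 1 := if_pos h4
      have h6 : ((k : ℝ) ^ 2) ^ 2 ≤ t ^ 4 := by
        have : (k : ℝ) ^ 2 ≤ t ^ 2 := by
          rw [← sq_abs]; exact pow_le_pow_left₀ (abs_nonneg _) h2 2
        nlinarith [sq_nonneg (k : ℝ)]
      rw [h3, h5]
      nlinarith [mul_nonneg (sq_nonneg c) (sq_nonneg (k : ℝ))]
    · -- |k| > t : trunc2 = 0
      have h3 : trunc2 t k = 0 := if_neg (not_le.2 h2)
      rw [h3]
      nlinarith [mul_nonneg (by positivity : (0:ℝ) ≤ t ^ 4) h0]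

set_option maxHeartbeats 1600000 in
/-- Let `(X_i)` be i.i.d., `ℤ_{≥−1}`-valued, with `P(X_1 = −1) > 0` and `E[X_1] = 0`.
Let `L₁(x) = x² P(X_1 ≥ x)` and `L(x) = Var(X_1 1_{|X_1| ≤ x})` be slowly varying with
`L₁/L → 0`, and let `a_n → ∞` satisfy `n L(a_n)/a_n² → 2`. Then
`a_n⁻² ∑_{i=1}^n X_i (X_i + 1)` converges to `2` in probability. -/
theorem stmt13 {Ω : Type} [MeasurableSpace Ω] (μ : Measure Ω) [IsProbabilityMeasure μ]
    (X : ℕ → Ω → ℤ) (hmeas : ∀ i, Measurable (X i)) (hval : ∀ i ω, -1 ≤ X i ω)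
    (hindep : iIndepFun X μ)
    (hident : ∀ i, Measure.map (X i) μ = Measure.map (X 0) μ)
    (hneg : 0 < μ {ω | X 0 ω = -1})
    (hint : Integrable (fun ω => (X 0 ω : ℝ)) μ)
    (hmean : ∫ ω, (X 0 ω : ℝ) ∂μ = 0)
    (L1 L : ℝ → ℝ)
    (hL1def : ∀ x : ℝ, 0 < x → L1 x = x ^ 2 * (μ {ω | x ≤ (X 0 ω : ℝ)}).toReal)
    (hLdef : ∀ x : ℝ, 0 < x →
      L x = variance (fun ω => if |(X 0 ω : ℝ)| ≤ x then (X 0 ω : ℝ) else 0) μ)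
    (hL1sv : ∀ c : ℝ, 0 < c → Tendsto (fun x => L1 (c * x) / L1 x) atTop (𝓝 1))
    (hLsv : ∀ c : ℝ, 0 < c → Tendsto (fun x => L (c * x) / L x) atTop (𝓝 1))
    (hratio : Tendsto (fun x => L1 x / L x) atTop (𝓝 0))
    (a : ℕ → ℝ) (hapos : ∀ n, 0 < a n) (ha : Tendsto a atTop atTop)
    (hnorm : Tendsto (fun n : ℕ => (n : ℝ) * L (a n) / (a n) ^ 2) atTop (𝓝 2)) :
    ∀ ε : ℝ, 0 < ε →
      Tendsto (fun n : ℕ => μ {ω | ε <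
          |((a n) ^ 2)⁻¹ * (∑ i ∈ Finset.range n, (X i ω : ℝ) * ((X i ω : ℝ) + 1)) - 2|})
        atTop (𝓝 0) := by
  intro ε hε
  classical
  -- basic measurability / distribution facts
  have hcast : Measurable (fun k : ℤ => (k : ℝ)) := measurable_of_countable _
  have hYm : ∀ i, Measurable (fun ω => (X i ω : ℝ)) := fun i => hcast.comp (hmeas i)
  have hXid : ∀ i, IdentDistrib (X i) (X 0) μ μ :=
    fun i => ⟨(hmeas i).aemeasurable, (hmeas 0).aemeasurable, hident i⟩
  have memg : ∀ (g : ℤ → ℝ) (C : ℝ), (∀ k, |g k| ≤ C) → ∀ i : ℕ,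
      MemLp (fun ω => g (X i ω)) 2 μ := by
    intro g C hC i
    refine (memLp_top_of_bound ((measurable_of_countable g).comp
      (hmeas i)).aestronglyMeasurable C ?_).mono_exponent le_top
    exact Eventually.of_forall fun ω => by simpa [Real.norm_eq_abs] using hC (X i ω)
  have intg : ∀ (g : ℤ → ℝ) (C : ℝ), (∀ k, |g k| ≤ C) → ∀ i : ℕ,
      Integrable (fun ω => g (X i ω)) μ :=
    fun g C hC i => (memg g C hC i).integrable one_le_two
  have hTransfer : ∀ (g : ℤ → ℝ) (i : ℕ),
      ∫ ω, g (X i ω) ∂μ = ∫ ω, g (X 0 ω) ∂μ := by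
    intro g i
    exact ((hXid i).comp (measurable_of_countable g)).integral_eq
  -- expectation functionals
  set β : ℝ → ℝ := fun t => ∫ ω, trunc1 t (X 0 ω) ∂μ with hβdef
  set m : ℝ → ℝ := fun t => ∫ ω, trunc2 t (X 0 ω) ∂μ with hmdef
  set w : ℝ → ℝ := fun t => ∫ ω, (trunc2 t (X 0 ω)) ^ 2 ∂μ with hwdef
  -- L x = m x - (β x)^2 hence m x = L x + (β x)^2
  have hmx : ∀ x : ℝ, 0 < x → m x = L x + (β x) ^ 2 := by
    intro x hx
    have hmem : MemLp (fun ω => trunc1 x (X 0 ω)) 2 μ :=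
      memg (trunc1 x) x (abs_trunc1_le x hx.le) 0
    have hvar : L x = m x - (β x) ^ 2 := by
      rw [hLdef x hx]
      have : (fun ω => if |(X 0 ω : ℝ)| ≤ x then (X 0 ω : ℝ) else 0)
          = fun ω => trunc1 x (X 0 ω) := rfl
      rw [this, variance_eq_sub hmem]
      congr 1
      refine integral_congr_ae (Eventually.of_forall fun ω => ?_)
      simp [Pi.pow_apply, trunc1_sq]
    linarith
  -- β → 0 at infinity
  have hβ0 : Tendsto β atTop (𝓝 0) := by
    have := tendsto_integral_filter_of_dominated_convergence (μ := μ)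
      (l := atTop) (F := fun t ω => trunc1 t (X 0 ω)) (f := fun ω => (X 0 ω : ℝ))
      (fun ω => |(X 0 ω : ℝ)|)
      (Eventually.of_forall fun t =>
        ((measurable_of_countable (trunc1 t)).comp (hmeas 0)).aestronglyMeasurable)
      (Eventually.of_forall fun t => Eventually.of_forall fun ω => by
        simpa [Real.norm_eq_abs] using abs_trunc1_le_abs t (X 0 ω))
      hint.abs
      (Eventually.of_forall fun ω => by
        apply Tendsto.congr' _ (tendsto_const_nhds (x := ((X 0 ω : ℝ))))
        filter_upwards [eventually_ge_atTop (|(X 0 ω : ℝ)|)] with t ht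
        simp [trunc1, ht])
    rw [hmean] at this
    exact this
  -- positivity of the variance in the limit
  have hp : (0 : ℝ) < (μ {ω | X 0 ω = -1}).toReal :=
    ENNReal.toReal_pos hneg.ne' (measure_ne_top μ _)
  set p : ℝ := (μ {ω | X 0 ω = -1}).toReal with hpdef
  have hm_lb : ∀ t : ℝ, 1 ≤ t → p ≤ m t := by
    intro t ht
    have hs : MeasurableSet {ω | X 0 ω = -1} := hmeas 0 (measurableSet_singleton (-1))
    have h1 : ∫ ω, Set.indicator {ω | X 0 ω = -1} (fun _ => (1 : ℝ)) ω ∂μ = p := by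
      rw [integral_indicator_const _ hs]; simp [hpdef, Measure.real]
    rw [← h1]
    refine integral_mono ((integrable_const (1:ℝ)).indicator hs)
      (intg (trunc2 t) (t ^ 2) (abs_trunc2_le t (by linarith) ) 0) fun ω => ?_
    by_cases hω : X 0 ω = -1
    · have : |((-1 : ℤ) : ℝ)| ≤ t := by norm_num; linarith
      simp [Set.indicator_apply, hω, trunc2, this, ht]
    · simp only [Set.indicator_apply, Set.mem_setOf_eq, hω, if_false]
      exact trunc2_nonneg t (X 0 ω)
  have hLlb : ∀ᶠ x in atTop, p / 2 ≤ L x := by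
    have hβ2 : Tendsto (fun x => (β x) ^ 2) atTop (𝓝 0) := by
      simpa using hβ0.pow 2
    filter_upwards [eventually_ge_atTop (1 : ℝ),
      hβ2.eventually_lt_const (half_pos hp)] with x h1 h2
    have := hm_lb x h1
    have hmeq := hmx x (by linarith)
    linarith
  have hLan : ∀ᶠ n in atTop, p / 2 ≤ L (a n) := ha.eventually hLlb
  -- n / a n ^ 2 is eventually bounded
  have hna : ∀ᶠ n : ℕ in atTop, (n : ℝ) / (a n) ^ 2 ≤ 6 / p := by
    filter_upwards [hLan, hnorm.eventually_lt_const (by norm_num : (2:ℝ) < 3)] with n h1 h2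
    have hA : (0 : ℝ) < (a n) ^ 2 := pow_pos (hapos n) 2
    have h3 : (n : ℝ) / (a n) ^ 2 * L (a n) < 3 := by
      rw [div_mul_eq_mul_div]; exact h2
    have h4 : (0 : ℝ) ≤ (n : ℝ) / (a n) ^ 2 := by positivity
    rw [le_div_iff₀ hp]
    nlinarith [mul_le_mul_of_nonneg_left h1 h4]
  -- the scaled tail terms go to zero
  have hsδ : ∀ δ : ℝ, 0 < δ →
      Tendsto (fun n : ℕ => (n : ℝ) * L1 (δ * a n) / (a n) ^ 2) atTop (𝓝 0) := by
    intro δ hδ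
    have hδa : Tendsto (fun n => δ * a n) atTop atTop := ha.const_mul_atTop hδ
    have h1 : Tendsto (fun n : ℕ => ((n : ℝ) * L (a n) / (a n) ^ 2) * (L (δ * a n) / L (a n))
        * (L1 (δ * a n) / L (δ * a n))) atTop (𝓝 0) := by
      have := (hnorm.mul ((hLsv δ hδ).comp ha)).mul (hratio.comp hδa)
      simpa using this
    apply h1.congr'
    filter_upwards [hLan, hδa.eventually hLlb] with n h2 h3
    have hL2 : L (a n) ≠ 0 := ne_of_gt (lt_of_lt_of_le (half_pos hp) h2)
    have hL3 : L (δ * a n) ≠ 0 := ne_of_gt (lt_of_lt_of_le (half_pos hp) h3)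
    have hA : (a n) ≠ 0 := (hapos n).ne'
    have hL3' : L (a n * δ) ≠ 0 := by rw [mul_comm]; exact hL3
    field_simp
  -- second truncated moment normalization
  have hm2 : Tendsto (fun n : ℕ => (n : ℝ) * m (a n) / (a n) ^ 2) atTop (𝓝 2) := by
    have hb2 : Tendsto (fun n => (β (a n)) ^ 2) atTop (𝓝 0) := by
      simpa using (hβ0.comp ha).pow 2
    have hq0 : Tendsto (fun n : ℕ => (n : ℝ) / (a n) ^ 2 * (β (a n)) ^ 2) atTop (𝓝 0) := by
      apply squeeze_zero' (Eventually.of_forall fun n => by positivity)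
        (g := fun n => 6 / p * (β (a n)) ^ 2)
      · filter_upwards [hna] with n h1
        exact mul_le_mul_of_nonneg_right h1 (sq_nonneg _)
      · simpa using hb2.const_mul (6 / p)
    have := hnorm.add hq0
    rw [add_zero] at this
    apply this.congr
    intro n
    rw [hmx (a n) (hapos n)]
    ring
  -- fourth moment normalization goes to zero
  have hw0 : Tendsto (fun n : ℕ => (n : ℝ) * w (a n) / (a n) ^ 4) atTop (𝓝 0) := by
    have hwnn : ∀ t, 0 ≤ w t := fun t => integral_nonneg fun ω => sq_nonneg _
    rw [NormedAddCommGroup.tendsto_nhds_zero]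
    intro η hη
    set δ : ℝ := min (1 / 2) (Real.sqrt (η / 8)) with hδdef
    have hδpos : 0 < δ := lt_min (by norm_num) (Real.sqrt_pos.2 (by positivity))
    have hδhalf : δ ≤ 1 / 2 := min_le_left _ _
    have hδsq : δ ^ 2 ≤ η / 8 := by
      have h1 : δ ≤ Real.sqrt (η / 8) := min_le_right _ _
      calc δ ^ 2 ≤ (Real.sqrt (η / 8)) ^ 2 := pow_le_pow_left₀ hδpos.le h1 2
        _ = η / 8 := Real.sq_sqrt (by positivity)
    have hδa : Tendsto (fun n => δ * a n) atTop atTop := ha.const_mul_atTop hδpos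
    have hR : Tendsto (fun n : ℕ => δ ^ 2 * ((n : ℝ) * m (a n) / (a n) ^ 2)
        + δ⁻¹ ^ 2 * ((n : ℝ) * L1 (δ * a n) / (a n) ^ 2)) atTop
        (𝓝 (δ ^ 2 * 2 + δ⁻¹ ^ 2 * 0)) :=
      (hm2.const_mul _).add ((hsδ δ hδpos).const_mul _)
    have h2δ : δ ^ 2 * 2 + δ⁻¹ ^ 2 * 0 < η := by
      rw [mul_zero, add_zero]; nlinarith
    have hqb : ∀ᶠ n : ℕ in atTop, (n : ℝ) * w (a n) / (a n) ^ 4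
        ≤ δ ^ 2 * ((n : ℝ) * m (a n) / (a n) ^ 2)
          + δ⁻¹ ^ 2 * ((n : ℝ) * L1 (δ * a n) / (a n) ^ 2) := by
      filter_upwards [hδa.eventually (eventually_ge_atTop (1 : ℝ))] with n h1
      have han := hapos n
      have hδan : (0 : ℝ) < δ * a n := by positivity
      set s : Set Ω := {ω | δ * a n ≤ (X 0 ω : ℝ)} with hsdef
      have hs : MeasurableSet s := measurableSet_le measurable_const (hYm 0)
      have hμs : (μ s).toReal = L1 (δ * a n) / (δ * a n) ^ 2 := by
        rw [hL1def _ hδan]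
        field_simp
        rfl
      have hct : δ * a n ≤ a n := by nlinarith
      have key : w (a n) ≤ (δ * a n) ^ 2 * m (a n) + (a n) ^ 4 * (μ s).toReal := by
        have hrhs : Integrable (fun ω => (δ * a n) ^ 2 * trunc2 (a n) (X 0 ω)
            + (a n) ^ 4 * Set.indicator s (fun _ => (1 : ℝ)) ω) μ :=
          ((intg (trunc2 (a n)) ((a n) ^ 2) (abs_trunc2_le _ han.le) 0).const_mul _).add
            (((integrable_const (1:ℝ)).indicator hs).const_mul _)
        have hlhs : Integrable (fun ω => (trunc2 (a n) (X 0 ω)) ^ 2) μ :=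
          intg (fun k => (trunc2 (a n) k) ^ 2) ((a n) ^ 4) (abs_trunc2_sq_le _ han.le) 0
        have hmono := integral_mono hlhs hrhs (fun ω => by
          have := trunc_sq_bound (hval 0 ω) h1 hct
          simpa [Set.indicator_apply, hsdef] using this)
        rw [integral_add ((intg (trunc2 (a n)) ((a n) ^ 2) (abs_trunc2_le _ han.le) 0).const_mul _)
            (((integrable_const (1:ℝ)).indicator hs).const_mul _),
          integral_const_mul, integral_const_mul, integral_indicator_const _ hs] at hmono
        simpa [hwdef, hmdef, smul_eq_mul, Measure.real] using hmono
      have hA4 : (0 : ℝ) < (a n) ^ 4 := by positivity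
      calc (n : ℝ) * w (a n) / (a n) ^ 4
          ≤ (n : ℝ) * ((δ * a n) ^ 2 * m (a n) + (a n) ^ 4 * (μ s).toReal) / (a n) ^ 4 := by
            gcongr
        _ = δ ^ 2 * ((n : ℝ) * m (a n) / (a n) ^ 2)
            + δ⁻¹ ^ 2 * ((n : ℝ) * L1 (δ * a n) / (a n) ^ 2) := by
            rw [hμs]
            field_simp
    filter_upwards [hqb, hR.eventually_lt_const h2δ] with n h1 h2
    have hq0 : 0 ≤ (n : ℝ) * w (a n) / (a n) ^ 4 := by
      have := hwnn (a n); positivity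
    rw [Real.norm_eq_abs, abs_of_nonneg hq0]
    exact lt_of_le_of_lt h1 h2
  -- the truncated sum
  set U : ℕ → Ω → ℝ := fun n ω => ∑ i ∈ Finset.range n, trunc2 (a n) (X i ω) with hUdef
  have hmemT : ∀ n i : ℕ, MemLp (fun ω => trunc2 (a n) (X i ω)) 2 μ :=
    fun n i => memg (trunc2 (a n)) ((a n) ^ 2) (abs_trunc2_le _ (hapos n).le) i
  have hUsum : ∀ n : ℕ, U n = ∑ i ∈ Finset.range n, (fun ω => trunc2 (a n) (X i ω)) := by
    intro n; funext ω; simp [hUdef, Finset.sum_apply]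
  have hUmem : ∀ n, MemLp (U n) 2 μ := by
    intro n; rw [hUsum n]
    exact memLp_finset_sum' _ (fun i _ => hmemT n i)
  have hEU : ∀ n : ℕ, ∫ ω, U n ω ∂μ = n * m (a n) := by
    intro n
    rw [hUdef]
    rw [integral_finset_sum _ (fun i _ =>
      intg (trunc2 (a n)) ((a n) ^ 2) (abs_trunc2_le _ (hapos n).le) i)]
    rw [Finset.sum_congr rfl (fun i _ => hTransfer (trunc2 (a n)) i)]
    simp [hmdef, mul_comm]
  have hVarU : ∀ n : ℕ, variance (U n) μ ≤ n * w (a n) := by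
    intro n
    have hpair : (↑(Finset.range n) : Set ℕ).Pairwise fun i j =>
        IndepFun (fun ω => trunc2 (a n) (X i ω)) (fun ω => trunc2 (a n) (X j ω)) μ := by
      intro i _ j _ hij
      exact (hindep.comp (fun _ => trunc2 (a n))
        (fun _ => measurable_of_countable _)).indepFun hij
    have h1 : variance (U n) μ = ∑ i ∈ Finset.range n,
        variance (fun ω => trunc2 (a n) (X i ω)) μ := by
      rw [hUsum n]
      exact IndepFun.variance_sum (fun i _ => hmemT n i) hpair
    have h2 : ∀ i : ℕ, variance (fun ω => trunc2 (a n) (X i ω)) μ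
        = variance (fun ω => trunc2 (a n) (X 0 ω)) μ :=
      fun i => ((hXid i).comp (measurable_of_countable (trunc2 (a n)))).variance_eq
    have h3 : variance (fun ω => trunc2 (a n) (X 0 ω)) μ ≤ w (a n) := by
      refine le_trans (variance_le_expectation_sq
        ((measurable_of_countable (trunc2 (a n))).comp (hmeas 0)).aestronglyMeasurable) ?_
      rw [hwdef]
      refine le_of_eq (integral_congr_ae (Eventually.of_forall fun ω => ?_))
      simp [Pi.pow_apply]
    rw [h1, Finset.sum_congr rfl fun i _ => h2 i, Finset.sum_const, Finset.card_range,
      nsmul_eq_mul]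
    exact mul_le_mul_of_nonneg_left h3 (Nat.cast_nonneg n)
  -- main quadratic term: Chebyshev
  have hE3 : Tendsto (fun n => μ {ω | ε / 2 < |((a n) ^ 2)⁻¹ * U n ω - 2|}) atTop (𝓝 0) := by
    have hbound : Tendsto (fun n : ℕ => ENNReal.ofReal
        (16 / ε ^ 2 * ((n : ℝ) * w (a n) / (a n) ^ 4))) atTop (𝓝 0) := by
      have := ENNReal.tendsto_ofReal (hw0.const_mul (16 / ε ^ 2))
      simpa using this
    apply tendsto_of_tendsto_of_tendsto_of_le_of_le' tendsto_const_nhds hbound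
      (Eventually.of_forall fun n => zero_le)
    have hd : ∀ᶠ n : ℕ in atTop, |(n : ℝ) * m (a n) / (a n) ^ 2 - 2| < ε / 4 := by
      have := Metric.tendsto_nhds.mp hm2 (ε / 4) (by positivity)
      simpa [Real.dist_eq] using this
    filter_upwards [hd] with n hdist
    have hA : (0 : ℝ) < (a n) ^ 2 := pow_pos (hapos n) 2
    have hsub : {ω | ε / 2 < |((a n) ^ 2)⁻¹ * U n ω - 2|}
        ⊆ {ω | ε / 4 * (a n) ^ 2 ≤ |U n ω - ∫ ω', U n ω' ∂μ|} := by
      intro ω hω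
      simp only [Set.mem_setOf_eq] at hω ⊢
      rw [hEU n]
      have h1 : ε / 4 ≤ |((a n) ^ 2)⁻¹ * U n ω - (n : ℝ) * m (a n) / (a n) ^ 2| := by
        have htri := abs_sub_le (((a n) ^ 2)⁻¹ * U n ω)
          ((n : ℝ) * m (a n) / (a n) ^ 2) (2 : ℝ)
        linarith
      have h2 : ((a n) ^ 2)⁻¹ * U n ω - (n : ℝ) * m (a n) / (a n) ^ 2
          = (U n ω - (n : ℝ) * m (a n)) / (a n) ^ 2 := by
        field_simp
      rw [h2, abs_div, abs_of_pos hA] at h1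
      calc ε / 4 * (a n) ^ 2 ≤ |U n ω - (n : ℝ) * m (a n)| / (a n) ^ 2 * (a n) ^ 2 := by
            exact mul_le_mul_of_nonneg_right h1 hA.le
        _ = |U n ω - (n : ℝ) * m (a n)| := div_mul_cancel₀ _ hA.ne'
    refine le_trans (measure_mono hsub) ?_
    refine le_trans (meas_ge_le_variance_div_sq (hUmem n) (by positivity : (0:ℝ) < ε / 4 * (a n) ^ 2))
      (ENNReal.ofReal_le_ofReal ?_)
    have hvar := hVarU n
    have hwn : 0 ≤ w (a n) := integral_nonneg fun ω => sq_nonneg _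
    calc variance (U n) μ / (ε / 4 * (a n) ^ 2) ^ 2
        ≤ ((n : ℝ) * w (a n)) / (ε / 4 * (a n) ^ 2) ^ 2 :=
          (div_le_div_iff_of_pos_right (by positivity)).2 hvar
      _ = 16 / ε ^ 2 * ((n : ℝ) * w (a n) / (a n) ^ 4) := by
          have hA : (a n) ≠ 0 := (hapos n).ne'
          have hεne : ε ≠ 0 := hε.ne'
          generalize w (a n) = W
          field_simp
          ring
  -- large values are unlikely
  have hE2 : Tendsto (fun n : ℕ => μ (⋃ i ∈ Finset.range n, {ω | a n < |(X i ω : ℝ)|}))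
      atTop (𝓝 0) := by
    have hs1 := hsδ 1 one_pos
    have hbound : Tendsto (fun n : ℕ => ENNReal.ofReal ((n : ℝ) * L1 (1 * a n) / (a n) ^ 2))
        atTop (𝓝 0) := by
      have := ENNReal.tendsto_ofReal hs1
      simpa using this
    apply tendsto_of_tendsto_of_tendsto_of_le_of_le' tendsto_const_nhds hbound
      (Eventually.of_forall fun n => zero_le)
    filter_upwards [ha.eventually (eventually_ge_atTop (1 : ℝ))] with n h1
    have hsm : MeasurableSet {x : ℝ | a n < |x|} :=
      measurableSet_lt measurable_const measurable_abs
    have heq : ∀ i : ℕ, μ {ω | a n < |(X i ω : ℝ)|} = μ {ω | a n < |(X 0 ω : ℝ)|} := by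
      intro i
      exact ((hXid i).comp hcast).measure_mem_eq hsm
    have hmono : μ {ω | a n < |(X 0 ω : ℝ)|} ≤ μ {ω | a n ≤ (X 0 ω : ℝ)} :=
      measure_mono fun ω hω => int_ge_of_abs_gt (hval 0 ω) h1 hω
    have hμval : μ {ω | a n ≤ (X 0 ω : ℝ)} = ENNReal.ofReal (L1 (a n) / (a n) ^ 2) := by
      have h2 := hL1def (a n) (hapos n)
      have h3 : (μ {ω | a n ≤ (X 0 ω : ℝ)}).toReal = L1 (a n) / (a n) ^ 2 := by
        rw [h2]; field_simp
      rw [← h3, ENNReal.ofReal_toReal (measure_ne_top μ _)]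
    calc μ (⋃ i ∈ Finset.range n, {ω | a n < |(X i ω : ℝ)|})
        ≤ ∑ i ∈ Finset.range n, μ {ω | a n < |(X i ω : ℝ)|} :=
          measure_biUnion_finset_le _ _
      _ ≤ ∑ i ∈ Finset.range n, μ {ω | a n ≤ (X 0 ω : ℝ)} := by
          refine Finset.sum_le_sum fun i _ => ?_
          rw [heq i]; exact hmono
      _ = n * ENNReal.ofReal (L1 (a n) / (a n) ^ 2) := by
          rw [Finset.sum_const, Finset.card_range, nsmul_eq_mul, hμval]
      _ ≤ ENNReal.ofReal ((n : ℝ) * L1 (1 * a n) / (a n) ^ 2) := by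
          rw [← ENNReal.ofReal_natCast n, ← ENNReal.ofReal_mul (Nat.cast_nonneg n)]
          apply ENNReal.ofReal_le_ofReal
          rw [one_mul, mul_div_assoc]
  -- linear term via strong law of large numbers
  have hE1 : Tendsto (fun n : ℕ => μ {ω | ε / 2 <
      |((a n) ^ 2)⁻¹ * ∑ i ∈ Finset.range n, (X i ω : ℝ)|}) atTop (𝓝 0) := by
    have hpair : Pairwise (Function.onFun (IndepFun · · μ) (fun i ω => (X i ω : ℝ))) := by
      intro i j hij
      exact (hindep.comp (fun _ => (fun k : ℤ => (k : ℝ))) (fun _ => hcast)).indepFun hij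
    have hidY : ∀ i, IdentDistrib (fun ω => (X i ω : ℝ)) (fun ω => (X 0 ω : ℝ)) μ μ :=
      fun i => (hXid i).comp hcast
    have hslln := strong_law_ae (fun i ω => (X i ω : ℝ)) hint hpair hidY
    have h0 : (μ[fun ω => (X 0 ω : ℝ)]) = 0 := hmean
    rw [h0] at hslln
    have hae : ∀ᵐ ω ∂μ, Tendsto (fun n : ℕ =>
        ((a n) ^ 2)⁻¹ * ∑ i ∈ Finset.range n, (X i ω : ℝ)) atTop (𝓝 0) := by
      filter_upwards [hslln] with ω hω
      apply squeeze_zero_norm'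
        (a := fun n : ℕ => 6 / p * ‖(n : ℝ)⁻¹ • ∑ i ∈ Finset.range n, (X i ω : ℝ)‖)
      · filter_upwards [hna, eventually_ge_atTop 1] with n h1 h2
        have hn : (n : ℝ) ≠ 0 := Nat.cast_ne_zero.2 (by omega)
        have hA : (a n) ≠ 0 := (hapos n).ne'
        rw [Real.norm_eq_abs, Real.norm_eq_abs, smul_eq_mul]
        have h3 : ((a n) ^ 2)⁻¹ * ∑ i ∈ Finset.range n, (X i ω : ℝ)
            = ((n : ℝ) / (a n) ^ 2) * ((n : ℝ)⁻¹ * ∑ i ∈ Finset.range n, (X i ω : ℝ)) := by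
          field_simp
        rw [h3, abs_mul]
        have h4 : |(n : ℝ) / (a n) ^ 2| = (n : ℝ) / (a n) ^ 2 := abs_of_nonneg (by positivity)
        rw [h4]
        exact mul_le_mul_of_nonneg_right h1 (abs_nonneg _)
      · simpa using (hω.norm).const_mul (6 / p)
    have hmZ : ∀ n : ℕ, AEStronglyMeasurable (fun ω =>
        ((a n) ^ 2)⁻¹ * ∑ i ∈ Finset.range n, (X i ω : ℝ)) μ :=
      fun n => (measurable_const.mul (Finset.measurable_sum _ fun i _ => hYm i)).aestronglyMeasurable
    have htm := tendstoInMeasure_of_tendsto_ae (g := fun _ => (0 : ℝ)) hmZ hae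
    have hh := tendstoInMeasure_iff_dist.1 htm (ε / 2) (half_pos hε)
    apply tendsto_of_tendsto_of_tendsto_of_le_of_le' tendsto_const_nhds hh
      (Eventually.of_forall fun n => zero_le)
    refine Eventually.of_forall fun n => measure_mono fun ω hω => ?_
    simp only [Set.mem_setOf_eq] at hω ⊢
    rw [Real.dist_eq, sub_zero]
    exact le_of_lt hω
  -- combine the three estimates
  have hsum : Tendsto (fun n : ℕ => μ {ω | ε / 2 <
        |((a n) ^ 2)⁻¹ * ∑ i ∈ Finset.range n, (X i ω : ℝ)|}
      + (μ (⋃ i ∈ Finset.range n, {ω | a n < |(X i ω : ℝ)|})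
        + μ {ω | ε / 2 < |((a n) ^ 2)⁻¹ * U n ω - 2|})) atTop (𝓝 0) := by
    have := hE1.add (hE2.add hE3)
    simpa using this
  apply tendsto_of_tendsto_of_tendsto_of_le_of_le' tendsto_const_nhds hsum
    (Eventually.of_forall fun n => zero_le)
  refine Eventually.of_forall fun n => ?_
  have hsub : {ω | ε <
      |((a n) ^ 2)⁻¹ * (∑ i ∈ Finset.range n, (X i ω : ℝ) * ((X i ω : ℝ) + 1)) - 2|}
      ⊆ {ω | ε / 2 < |((a n) ^ 2)⁻¹ * ∑ i ∈ Finset.range n, (X i ω : ℝ)|}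
        ∪ ((⋃ i ∈ Finset.range n, {ω | a n < |(X i ω : ℝ)|})
          ∪ {ω | ε / 2 < |((a n) ^ 2)⁻¹ * U n ω - 2|}) := by
    intro ω hω
    simp only [Set.mem_setOf_eq] at hω
    by_contra hc
    simp only [Set.mem_union, Set.mem_setOf_eq, Set.mem_iUnion, not_or, not_exists,
      not_lt, exists_prop] at hc
    obtain ⟨h1, h2, h3⟩ := hc
    have h2' : ∀ i ∈ Finset.range n, ¬ (a n < |(X i ω : ℝ)|) := by
      intro i hi hlt
      exact absurd hlt (by simpa using h2 i ⟨hi, hlt⟩)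
    have hUeq : U n ω = ∑ i ∈ Finset.range n, (X i ω : ℝ) ^ 2 := by
      rw [hUdef]
      refine Finset.sum_congr rfl fun i hi => ?_
      have := not_lt.1 fun hlt => h2' i hi hlt
      exact if_pos this
    have hsplit : ∑ i ∈ Finset.range n, (X i ω : ℝ) * ((X i ω : ℝ) + 1)
        = U n ω + ∑ i ∈ Finset.range n, (X i ω : ℝ) := by
      rw [hUeq, ← Finset.sum_add_distrib]
      refine Finset.sum_congr rfl fun i _ => by ring
    have hval2 : ((a n) ^ 2)⁻¹ * (∑ i ∈ Finset.range n, (X i ω : ℝ) * ((X i ω : ℝ) + 1)) - 2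
        = (((a n) ^ 2)⁻¹ * U n ω - 2) + ((a n) ^ 2)⁻¹ * ∑ i ∈ Finset.range n, (X i ω : ℝ) := by
      rw [hsplit]; ring
    rw [hval2] at hω
    have habs := abs_add_le (((a n) ^ 2)⁻¹ * U n ω - 2)
      (((a n) ^ 2)⁻¹ * ∑ i ∈ Finset.range n, (X i ω : ℝ))
    linarith
  calc μ {ω | ε <
      |((a n) ^ 2)⁻¹ * (∑ i ∈ Finset.range n, (X i ω : ℝ) * ((X i ω : ℝ) + 1)) - 2|}
      ≤ μ ({ω | ε / 2 < |((a n) ^ 2)⁻¹ * ∑ i ∈ Finset.range n, (X i ω : ℝ)|}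
        ∪ ((⋃ i ∈ Finset.range n, {ω | a n < |(X i ω : ℝ)|})
          ∪ {ω | ε / 2 < |((a n) ^ 2)⁻¹ * U n ω - 2|})) := measure_mono hsub
    _ ≤ μ {ω | ε / 2 < |((a n) ^ 2)⁻¹ * ∑ i ∈ Finset.range n, (X i ω : ℝ)|}
        + μ ((⋃ i ∈ Finset.range n, {ω | a n < |(X i ω : ℝ)|})
          ∪ {ω | ε / 2 < |((a n) ^ 2)⁻¹ * U n ω - 2|}) := measure_union_le _ _
    _ ≤ μ {ω | ε / 2 < |((a n) ^ 2)⁻¹ * ∑ i ∈ Finset.range n, (X i ω : ℝ)|}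
        + (μ (⋃ i ∈ Finset.range n, {ω | a n < |(X i ω : ℝ)|})
          + μ {ω | ε / 2 < |((a n) ^ 2)⁻¹ * U n ω - 2|}) :=
        add_le_add_right (measure_union_le _ _) _
end

section
/- Let (X_i)_{i≥1} be i.i.d. random variables with values in ℤ_{≥−1} = {−1,0,1,2,…}, and let S_0 = 0, S_j = X_1 + ⋯ + X_j. Then for all integers ρ ≥ 1 and n ≥ 1, the first hitting time ζ_ρ = inf{ j ≥ 1 : S_j = −ρ } satisfies P(ζ_ρ = n) = (ρ/n) · P(S_n = −ρ). -/
/-!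
Reading the first `n` steps cyclically from position `k` does not change their joint law, since
the steps are i.i.d.; hence `n · P(ζ_ρ = n)` is the expected number of rotations `k < n` whose
walk first hits `-ρ` at time `n`. By the cycle lemma this number is `ρ` when `S_n = -ρ` and `0`
otherwise. Indeed, extending the steps periodically, rotation `k` works exactly when `k + n` is a
strict record low of the walk. As the walk moves down by at most one per step, the record lows
in `[n, 2n)` take each value between the minimum `m` of the walk on `[0, n)` and `m - ρ` exactly
once.
-/

open MeasureTheory ProbabilityTheory
open scoped ENNReal

namespace Kemperman

open Finset

def prefixMin (f : ℕ → ℤ) : ℕ → ℤ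
  | 0 => f 0
  | t + 1 => min (prefixMin f t) (f (t + 1))

section PrefixMin

variable {f : ℕ → ℤ}

lemma prefixMin_le {t m : ℕ} (h : m ≤ t) : prefixMin f t ≤ f m := by
  induction t with
  | zero => obtain rfl := Nat.le_zero.1 h; rfl
  | succ t ih =>
    rcases Nat.of_le_succ h with h | rfl
    · exact (min_le_left _ _).trans (ih h)
    · exact min_le_right _ _

lemma le_prefixMin {t : ℕ} {c : ℤ} (h : ∀ m ≤ t, c ≤ f m) : c ≤ prefixMin f t := by
  induction t with
  | zero => exact h 0 le_rfl
  | succ t ih => exact le_min (ih fun m hm => h m (hm.trans t.le_succ)) (h _ le_rfl)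

lemma lt_prefixMin_iff {t : ℕ} {c : ℤ} : c < prefixMin f t ↔ ∀ m ≤ t, c < f m :=
  ⟨fun h _ hm => h.trans_le (prefixMin_le hm), fun h => le_prefixMin h⟩

lemma prefixMin_add_of_forall_add_eq {n : ℕ} {d : ℤ} (hd : 0 ≤ d)
    (hf : ∀ t, f (t + n) = f t - d) {t : ℕ} (ht : n ≤ t + 1) :
    prefixMin f (t + n) = prefixMin f t - d := by
  refine le_antisymm ?_ (le_prefixMin fun m hm => ?_)
  · have : prefixMin f (t + n) + d ≤ prefixMin f t :=
      le_prefixMin fun m hm => by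
        have := prefixMin_le (f := f) (show m + n ≤ t + n by omega)
        linarith [hf m]
    linarith
  · rcases lt_or_ge m n with hmn | hmn
    · linarith [prefixMin_le (f := f) (show m ≤ t by omega)]
    · have := hf (m - n)
      rw [Nat.sub_add_cancel hmn] at this
      linarith [prefixMin_le (f := f) (show m - n ≤ t by omega)]

-- A walk moving down by at most one per step reaches each new record low one below the last.
lemma card_filter_lt_prefixMin (hstep : ∀ t, f t - 1 ≤ f (t + 1)) {a b : ℕ} (hab : a ≤ b) :
    (#{t ∈ Ico a b | f (t + 1) < prefixMin f t} : ℤ) = prefixMin f a - prefixMin f b := by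
  induction b, hab using Nat.le_induction with
  | base => simp
  | succ b hab ih =>
    have hmin : prefixMin f (b + 1) = min (prefixMin f b) (f (b + 1)) := rfl
    have hb : prefixMin f b ≤ f b := prefixMin_le le_rfl
    have := hstep b
    rw [Nat.Ico_succ_right_eq_insert_Ico hab, filter_insert]
    split_ifs with h
    · rw [card_insert_of_notMem (by simp)]
      push_cast
      omega
    · omega

lemma lt_of_forall_ne_of_lt (hstep : ∀ t, f t - 1 ≤ f (t + 1)) {a b t : ℕ} {c : ℤ}
    (ha : c < f a) (hne : ∀ s, a < s → s ≤ b → f s ≠ c) (hat : a ≤ t) (htb : t ≤ b) :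
    c < f t := by
  induction t, hat using Nat.le_induction with
  | base => exact ha
  | succ t hat ih =>
    have := ih (by omega)
    have := hstep t
    have := hne (t + 1) (by omega) htb
    omega

end PrefixMin

def walk (x : ℕ → ℤ) (t : ℕ) : ℤ := ∑ i ∈ range t, x i

def FirstHits (x : ℕ → ℤ) (ρ n : ℕ) : Prop :=
  walk x n = -(ρ : ℤ) ∧ ∀ j, 1 ≤ j → j < n → walk x j ≠ -(ρ : ℤ)

section Walk

open scoped Classical

variable {x y : ℕ → ℤ} {n ρ : ℕ}

lemma walk_zero : walk x 0 = 0 := sum_range_zero _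

lemma walk_succ (t : ℕ) : walk x (t + 1) = walk x t + x t := sum_range_succ _ _

lemma walk_add (a b : ℕ) : walk x (a + b) = walk x a + walk (fun i => x (a + i)) b :=
  sum_range_add _ _ _

lemma walk_sub_one_le_succ (hx : ∀ i, -1 ≤ x i) (t : ℕ) :
    walk x t - 1 ≤ walk x (t + 1) := by
  rw [walk_succ]; linarith [hx t]

lemma walk_shift_of_periodic (hper : Function.Periodic x n) (k : ℕ) :
    walk (fun i => x (k + i)) n = walk x n := by
  induction k with
  | zero => simp
  | succ k ih =>
    have h1 : ∑ i ∈ range (n + 1), x (k + i) = ∑ i ∈ range n, x (k + 1 + i) + x k := by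
      simp only [sum_range_succ', add_right_comm k, add_assoc, add_zero]
    have h2 : ∑ i ∈ range (n + 1), x (k + i) = ∑ i ∈ range n, x (k + i) + x k := by
      rw [sum_range_succ, hper k]
    rw [walk] at ih ⊢
    linarith

lemma walk_add_period (hper : Function.Periodic x n) (t : ℕ) :
    walk x (t + n) = walk x t + walk x n := by
  rw [walk_add, walk_shift_of_periodic hper]

lemma firstHits_congr (h : ∀ i < n, x i = y i) : FirstHits x ρ n ↔ FirstHits y ρ n := by
  have hw : ∀ j ≤ n, walk x j = walk y j := fun j hj =>
    sum_congr rfl fun i hi => h i ((mem_range.1 hi).trans_le hj)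
  unfold FirstHits
  rw [hw n le_rfl]
  exact and_congr_right' <| forall_congr' fun j => imp_congr_right fun _ =>
    imp_congr_right fun hj => by rw [hw j hj.le]

lemma firstHits_shift_iff (hper : Function.Periodic x n) (hx : ∀ i, -1 ≤ x i) (hρ : 0 < ρ)
    (hsum : walk x n = -(ρ : ℤ)) {k : ℕ} (hk : k < n) :
    FirstHits (fun i => x (k + i)) ρ n ↔ ∀ m < k + n, walk x (k + n) < walk x m := by
  have hshift : ∀ j, walk (fun i => x (k + i)) j = walk x (k + j) - walk x k := fun j => by
    rw [walk_add]; ring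
  have hkn : walk x (k + n) = walk x k - ρ := by rw [walk_add_period hper, hsum]; ring
  simp only [FirstHits, hshift, hkn, sub_sub_cancel_left, true_and]
  constructor
  · intro havoid
    have habove : ∀ t, k ≤ t → t ≤ k + n - 1 → walk x k - ρ < walk x t := fun t =>
      lt_of_forall_ne_of_lt (walk_sub_one_le_succ hx) (by omega) fun s hks hsn hs =>
        havoid (s - k) (by omega) (by omega) (by rw [Nat.add_sub_cancel' hks.le, hs]; ring)
    intro m hm
    rcases le_or_gt k m with hkm | hmk
    · exact habove m hkm (by omega)
    · have := habove (m + n) (by omega) (by omega)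
      rw [walk_add_period hper, hsum] at this
      linarith
  · intro hrec j _ hj heq
    have := hrec (k + j) (by omega)
    linarith

lemma card_firstHits_shift_of_walk_eq (hper : Function.Periodic x n) (hx : ∀ i, -1 ≤ x i)
    (hρ : 0 < ρ) (hsum : walk x n = -(ρ : ℤ)) :
    #{k ∈ range n | FirstHits (fun i => x (k + i)) ρ n} = ρ := by
  obtain ⟨m, rfl⟩ : ∃ m, n = m + 1 := Nat.exists_eq_succ_of_ne_zero <| by
    rintro rfl; rw [walk_zero] at hsum; omega
  have hcard : #{k ∈ range (m + 1) | FirstHits (fun i => x (k + i)) ρ (m + 1)}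
      = #{t ∈ Ico m (m + (m + 1)) | walk x (t + 1) < prefixMin (walk x) t} := by
    refine card_nbij' (· + m) (· - m) ?_ ?_ ?_ ?_
    · intro k hk
      simp only [coe_filter, Set.mem_ofPred_eq, mem_range, mem_Ico] at hk ⊢
      refine ⟨by omega, ?_⟩
      rw [firstHits_shift_iff hper hx hρ hsum hk.1] at hk
      rw [lt_prefixMin_iff]
      intro t ht
      convert hk.2 t (by omega) using 2
      omega
    · intro t ht
      simp only [coe_filter, Set.mem_ofPred_eq, mem_range, mem_Ico] at ht ⊢
      refine ⟨by omega, ?_⟩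
      rw [firstHits_shift_iff hper hx hρ hsum (by omega)]
      rw [lt_prefixMin_iff] at ht
      intro s hs
      convert ht.2 s (by omega) using 2
      omega
    · intro k _; simp
    · intro t ht
      simp only [coe_filter, Set.mem_ofPred_eq, mem_Ico] at ht
      simp only; omega
  have hmin := prefixMin_add_of_forall_add_eq (f := walk x) (Int.natCast_nonneg ρ)
    (fun t => by rw [walk_add_period hper, hsum]; ring) le_rfl
  have := card_filter_lt_prefixMin (walk_sub_one_le_succ hx) (show m ≤ m + (m + 1) by omega)
  omega

lemma card_firstHits_shift (hper : Function.Periodic x n) (hx : ∀ i, -1 ≤ x i) (hρ : 0 < ρ) :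
    #{k ∈ range n | FirstHits (fun i => x (k + i)) ρ n}
      = if walk x n = -(ρ : ℤ) then ρ else 0 := by
  split_ifs with hsum
  · exact card_firstHits_shift_of_walk_eq hper hx hρ hsum
  · refine card_eq_zero.2 (filter_eq_empty_iff.2 fun k _ hk => hsum ?_)
    rw [← walk_shift_of_periodic hper k]
    exact hk.1

end Walk

lemma eq_div_mul_of_mul_eq {a b c d : ℝ≥0∞} (hab : a ≤ b) (hc : c ≠ 0) (hd : d ≠ ⊤)
    (h : d * a = c * b) : a = c / d * b := by
  rcases eq_or_ne d 0 with rfl | hd0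
  · have hb : b = 0 := by simpa [hc] using h.symm
    simp [hb, le_zero_iff.1 (hb ▸ hab)]
  · rw [← ENNReal.mul_div_right_comm, ENNReal.eq_div_iff hd0 hd, h]

section Probability

variable {Ω : Type*} {X : ℕ → Ω → ℤ} {n ρ : ℕ}

lemma setOf_firstHits_eq_preimage (f : ℕ → ℕ) :
    {ω | FirstHits (fun i => X (f i) ω) ρ n}
      = (fun ω (i : Fin n) => X (f i) ω) ⁻¹'
          {y | FirstHits (fun i => if h : i < n then y ⟨i, h⟩ else 0) ρ n} := by
  ext ω
  exact firstHits_congr fun i hi => by simp [hi]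

variable [MeasurableSpace Ω] {μ : Measure Ω}

lemma measurableSet_firstHits (hmeas : ∀ i, Measurable (X i)) (f : ℕ → ℕ) :
    MeasurableSet {ω | FirstHits (fun i => X (f i) ω) ρ n} := by
  rw [setOf_firstHits_eq_preimage]
  exact measurable_pi_lambda _ (fun i => hmeas _) (Set.to_countable _).measurableSet

lemma measure_firstHits_rotate {ν : Measure ℤ} (hmeas : ∀ i, Measurable (X i))
    (hindep : iIndepFun X μ) (hident : ∀ i, μ.map (X i) = ν) (k : ℕ) :
    μ {ω | FirstHits (fun i => X ((k + i) % n) ω) ρ n}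
      = μ {ω | FirstHits (fun i => X i ω) ρ n} := by
  have hlaw : ∀ f : Fin n → ℕ, f.Injective →
      μ.map (fun ω i => X (f i) ω) = Measure.pi fun _ => ν := fun f hf => by
    rw [(hindep.precomp hf).map_fun_eq_pi_map fun i => (hmeas _).aemeasurable]
    simp only [hident]
  have hrot : (fun i : Fin n => (k + i) % n).Injective := fun i j hij =>
    Fin.ext (Nat.ModEq.eq_of_lt_of_lt (Nat.ModEq.add_left_cancel' k hij) i.2 j.2)
  have hY : ∀ f : Fin n → ℕ, Measurable fun ω i => X (f i) ω := fun f =>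
    measurable_pi_lambda _ fun i => hmeas _
  rw [setOf_firstHits_eq_preimage (fun i => (k + i) % n),
    show {ω | FirstHits (fun i => X i ω) ρ n} = _ from setOf_firstHits_eq_preimage fun i => i,
    ← Measure.map_apply (hY _) (Set.to_countable _).measurableSet,
    ← Measure.map_apply (hY _) (Set.to_countable _).measurableSet,
    hlaw _ hrot, hlaw _ Fin.val_injective]

open scoped Classical in
lemma sum_measure_firstHits_rotate (hmeas : ∀ i, Measurable (X i))
    (hval : ∀ i ω, -1 ≤ X i ω) (hρ : 0 < ρ) :
    ∑ k ∈ range n, μ {ω | FirstHits (fun i => X ((k + i) % n) ω) ρ n}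
      = ρ * μ {ω | walk (fun i => X i ω) n = -(ρ : ℤ)} := by
  have hcount : ∀ ω, #{k ∈ range n | FirstHits (fun i => X ((k + i) % n) ω) ρ n}
      = if walk (fun i => X i ω) n = -(ρ : ℤ) then ρ else 0 := fun ω => by
    have hwalk : walk (fun i => X (i % n) ω) n = walk (fun i => X i ω) n :=
      sum_congr rfl fun i hi => by simp only [Nat.mod_eq_of_lt (mem_range.1 hi)]
    rw [← hwalk]
    exact card_firstHits_shift (x := fun i => X (i % n) ω)
      (fun t => by simp only [Nat.add_mod_right]) (fun i => hval _ ω) hρ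
  have hB : MeasurableSet {ω | walk (fun i => X i ω) n = -(ρ : ℤ)} :=
    measurableSet_eq_fun (Finset.measurable_sum _ fun i _ => hmeas i) measurable_const
  simp_rw [← lintegral_indicator_one (measurableSet_firstHits hmeas _),
    ← lintegral_indicator_one hB]
  rw [← lintegral_finsetSum _ fun k _ =>
      measurable_one.indicator (measurableSet_firstHits hmeas _),
    ← lintegral_const_mul _ (measurable_one.indicator hB)]
  refine lintegral_congr fun ω => ?_
  simp only [Set.indicator_apply, Set.mem_ofPred_eq, Pi.one_apply, sum_boole, hcount ω]
  split_ifs <;> simp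

end Probability

end Kemperman

theorem stmt15_general {Ω : Type} [MeasurableSpace Ω] (μ : Measure Ω)
    (X : ℕ → Ω → ℤ) (hmeas : ∀ i, Measurable (X i)) (hval : ∀ i ω, -1 ≤ X i ω)
    (hindep : iIndepFun X μ)
    (hident : ∀ i, Measure.map (X i) μ = Measure.map (X 0) μ)
    (S : ℕ → Ω → ℤ) (hS : ∀ j ω, S j ω = ∑ i ∈ Finset.range j, X i ω)
    (ρ n : ℕ) (hρ : 1 ≤ ρ) :
    μ {ω | S n ω = -(ρ : ℤ) ∧ ∀ j : ℕ, 1 ≤ j → j < n → S j ω ≠ -(ρ : ℤ)}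
      = ((ρ : ℝ≥0∞) / (n : ℝ≥0∞)) * μ {ω | S n ω = -(ρ : ℤ)} := by
  have hS' : S = fun j ω => Kemperman.walk (fun i => X i ω) j := funext₂ hS
  subst hS'
  have hsum := Kemperman.sum_measure_firstHits_rotate (μ := μ) hmeas hval (n := n) hρ
  simp only [Kemperman.measure_firstHits_rotate hmeas hindep hident, Finset.sum_const,
    Finset.card_range, nsmul_eq_mul] at hsum
  exact Kemperman.eq_div_mul_of_mul_eq (measure_mono fun ω hω => hω.1)
    (Nat.cast_ne_zero.2 (by omega)) (ENNReal.natCast_ne_top n) hsum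

/-- Kemperman's formula: for a random walk `S` with i.i.d. steps taking values in
`ℤ_{≥−1} = {−1,0,1,2,…}`, for all `ρ ≥ 1` and `n ≥ 1`, the first hitting time
`ζ_ρ = inf{j ≥ 1 : S_j = −ρ}` satisfies `P(ζ_ρ = n) = (ρ/n) P(S_n = −ρ)`. -/
theorem stmt15 {Ω : Type} [MeasurableSpace Ω] (μ : Measure Ω) [IsProbabilityMeasure μ]
    (X : ℕ → Ω → ℤ) (hmeas : ∀ i, Measurable (X i)) (hval : ∀ i ω, -1 ≤ X i ω)
    (hindep : iIndepFun X μ)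
    (hident : ∀ i, Measure.map (X i) μ = Measure.map (X 0) μ)
    (S : ℕ → Ω → ℤ) (hS : ∀ j ω, S j ω = ∑ i ∈ Finset.range j, X i ω)
    (ρ n : ℕ) (hρ : 1 ≤ ρ) (hn : 1 ≤ n) :
    μ {ω | S n ω = -(ρ : ℤ) ∧ ∀ j : ℕ, 1 ≤ j → j < n → S j ω ≠ -(ρ : ℤ)}
      = ((ρ : ℝ≥0∞) / (n : ℝ≥0∞)) * μ {ω | S n ω = -(ρ : ℤ)} :=
  stmt15_general μ X hmeas hval hindep hident S hS ρ n hρ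
end
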